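/- arXiv:math/0510242 — 10 statements merged into one kernel-verified Lean document; each statement's English description precedes it below -/
import Mathlib

section
/- For 0 < α ≤ 1 and 0 < y ≤ 1, one has (1 + αy/(α+1)) · (1 - y/(α+1))^α < 1. -/
/-! Bernoulli's inequality for exponents in `[0, 1]` gives `(1 - t) ^ α ≤ 1 - α t`, so with
`t = y / (α + 1)` the product is at most `(1 + α t)(1 - α t) = 1 - (α t) ^ 2 < 1`. -/

theorem one_sub_rpow_le_one_sub_mul {α t : ℝ} (hα0 : 0 ≤ α) (hα1 : α ≤ 1) (ht1 : t ≤ 1) :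
    (1 - t) ^ α ≤ 1 - α * t := by
  simpa [← sub_eq_add_neg] using rpow_one_add_le_one_add_mul_self (s := -t) (by linarith) hα0 hα1

theorem one_add_mul_mul_one_sub_rpow_lt_one {α t : ℝ} (hα0 : 0 < α) (hα1 : α ≤ 1) (ht0 : 0 < t)
    (ht1 : t ≤ 1) : (1 + α * t) * (1 - t) ^ α < 1 := by
  have hαt : 0 < α * t := mul_pos hα0 ht0
  calc (1 + α * t) * (1 - t) ^ α
      ≤ (1 + α * t) * (1 - α * t) := by
        gcongr
        exact one_sub_rpow_le_one_sub_mul hα0.le hα1 ht1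
    _ = 1 - (α * t) ^ 2 := by ring
    _ < 1 := by nlinarith

theorem stmt0 (α y : ℝ) (hα0 : 0 < α) (hα1 : α ≤ 1) (hy0 : 0 < y) (hy1 : y ≤ 1) :
    (1 + α * y / (α + 1)) * (1 - y / (α + 1)) ^ α < 1 := by
  have hα : 0 < α + 1 := by linarith
  have ht1 : y / (α + 1) ≤ 1 := by rw [div_le_one hα]; linarith
  rw [mul_div_assoc]
  exact one_add_mul_mul_one_sub_rpow_lt_one hα0 hα1 (div_pos hy0 hα) ht1
end

section
/- For α ≥ 1 and 0 < y ≤ 1, one has (1 + αy/(α+1)) · (1 - y/(α+1))^α < 1. -/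
/-! Weighted AM–GM with weights `1/(a+1)` and `a/(a+1)` applied to `1 + a x` and `1 - x`, whose
weighted arithmetic mean is exactly `1`; the inequality is strict because the two values differ
for `x ≠ 0`. Raising the geometric mean to the power `a + 1` gives the claim. -/

open Real

theorem one_add_mul_mul_one_sub_rpow_lt_one_s1 {a x : ℝ} (ha : 0 < a) (hx0 : 0 < x) (hx1 : x ≤ 1) :
    (1 + a * x) * (1 - x) ^ a < 1 := by
  have ha1 : 0 < a + 1 := by linarith
  have hp₁ : 0 ≤ 1 + a * x := by positivity
  have hp₂ : 0 ≤ 1 - x := by linarith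
  have hmean : (1 + a * x) ^ (a + 1)⁻¹ * (1 - x) ^ (a / (a + 1)) < 1 := by
    calc _ < (a + 1)⁻¹ * (1 + a * x) + a / (a + 1) * (1 - x) :=
          (geom_mean_lt_arith_mean2_weighted_iff_of_pos (inv_pos.2 ha1) (div_pos ha ha1) hp₁ hp₂
            (by field_simp; ring)).2 (by nlinarith)
      _ = 1 := by field_simp; ring
  calc (1 + a * x) * (1 - x) ^ a
      = ((1 + a * x) ^ (a + 1)⁻¹ * (1 - x) ^ (a / (a + 1))) ^ (a + 1) := by
        rw [mul_rpow (by positivity) (by positivity), ← rpow_mul hp₁, ← rpow_mul hp₂,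
          inv_mul_cancel₀ ha1.ne', div_mul_cancel₀ a ha1.ne', rpow_one]
    _ < 1 := rpow_lt_one (by positivity) hmean ha1

theorem stmt1 (α y : ℝ) (hα : 1 ≤ α) (hy0 : 0 < y) (hy1 : y ≤ 1) :
    (1 + α * y / (α + 1)) * (1 - y / (α + 1)) ^ α < 1 := by
  have hα1 : 0 < α + 1 := by linarith
  rw [mul_div_assoc]
  exact one_add_mul_mul_one_sub_rpow_lt_one_s1 (by linarith) (div_pos hy0 hα1)
    ((div_le_one hα1).2 (by linarith))
end

section
/- Let α ∈ (0,1) and 0 < y ≤ 1. Then (1 + αy/(α+1))^{-1/α} < 1 - y·(1/(α+1) - 1/2). -/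
/-! Put `u = y / (α + 1)`. Bernoulli's inequality with exponent `1 / α ≥ 1` gives
`(1 + α u) ^ (1 / α) ≥ 1 + u`, so the left side is at most `(1 + u)⁻¹`, and
`(1 + u)(1 - u (1 - α) / 2) = 1 + u ((1 + α) - u (1 - α)) / 2 > 1` because `u < 1`. -/

lemma one_add_le_rpow_one_div {α u : ℝ} (hα0 : 0 < α) (hα1 : α ≤ 1) (hu : -1 ≤ α * u) :
    1 + u ≤ (1 + α * u) ^ (1 / α) := by
  have hbernoulli := one_add_mul_self_le_rpow_one_add hu (one_le_one_div hα0 hα1)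
  rwa [← mul_assoc, one_div_mul_cancel hα0.ne', one_mul] at hbernoulli

lemma inv_one_add_lt_one_sub_mul {α u : ℝ} (hu : 0 < u) (huα : u * (1 - α) < 1 + α) :
    (1 + u)⁻¹ < 1 - u * ((1 - α) / 2) := by
  rw [inv_lt_iff_one_lt_mul₀ (by linarith)]
  nlinarith

theorem stmt3 (α y : ℝ) (hα0 : 0 < α) (hα1 : α < 1) (hy0 : 0 < y) (hy1 : y ≤ 1) :
    (1 + α * y / (α + 1)) ^ (-(1 / α)) < 1 - y * (1 / (α + 1) - 1 / 2) := by
  set u := y / (α + 1) with hu_def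
  have hu0 : 0 < u := by positivity
  have hu1 : u < 1 := (div_lt_one (by linarith)).2 (by linarith)
  have hbase : α * y / (α + 1) = α * u := mul_div_assoc α y (α + 1)
  have hrhs : y * (1 / (α + 1) - 1 / 2) = u * ((1 - α) / 2) := by
    rw [hu_def]; field_simp; ring
  rw [hbase, hrhs, Real.rpow_neg (by positivity)]
  calc ((1 + α * u) ^ (1 / α))⁻¹
      ≤ (1 + u)⁻¹ := inv_anti₀ (by positivity)
        (one_add_le_rpow_one_div hα0 hα1.le (by nlinarith))
    _ < 1 - u * ((1 - α) / 2) := inv_one_add_lt_one_sub_mul hu0 (by nlinarith)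
end

section
/- Let α > 0, let f(y) = (1 + αy/(α+1))^{-1/α}, and define f_1(y) = 1 - y/(α+1) and f_{n+1}((1+1/n)y) = f_n(y) - (y/((α+1)n))·f_n(y)^{α+1} for 0 < y ≤ n. Then for all n ≥ 1 and 0 < y ≤ n, f_n(y) < f(y). -/
/-!
Induction on `n` with the invariant `0 ≤ f_n y < f y`. Writing `c = y / ((α + 1) n)`, the
recursion reads `f_{n+1}(y + (α + 1) c) = φ_c (f_n y)` with `φ_c x = x - c x^(α+1)`, and
`c (α + 1) = y / n ≤ 1` makes `φ_c` strictly increasing on `[0, 1]`. So the invariant propagates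
once `φ_c (f y) < f (y + (α + 1) c)`, i.e. once `f` is a strict supersolution of the scheme;
after scaling out `f y` this is `1 - t < (1 + α t)^(-1/α)`, which follows from
`1 - t < exp (-t)` and `1 + α t ≤ exp (α t)`.
-/

open Real Set

noncomputable def limitProfile (α y : ℝ) : ℝ := (1 + α * y / (α + 1)) ^ (-(1 / α))

section

variable {α : ℝ}

lemma one_sub_lt_one_add_mul_rpow_neg_inv (hα : 0 < α) {t : ℝ} (ht : 0 < t) :
    1 - t < (1 + α * t) ^ (-(1 / α)) := by
  have hpos : 0 < 1 + α * t := by positivity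
  calc 1 - t < exp (-t) := by linarith [add_one_lt_exp (neg_ne_zero.mpr ht.ne')]
    _ = exp (α * t) ^ (-(1 / α)) := by rw [← exp_mul]; field_simp
    _ ≤ (1 + α * t) ^ (-(1 / α)) :=
      rpow_le_rpow_of_nonpos hpos (by linarith [add_one_le_exp (α * t)])
        (by simp only [neg_nonpos, one_div, inv_nonneg]; exact hα.le)

lemma limitProfile_pos (hα : 0 < α) {y : ℝ} (hy : 0 ≤ y) : 0 < limitProfile α y :=
  rpow_pos_of_pos (by positivity) _

lemma limitProfile_le_one (hα : 0 < α) {y : ℝ} (hy : 0 ≤ y) : limitProfile α y ≤ 1 :=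
  rpow_le_one_of_one_le_of_nonpos (le_add_of_nonneg_right (by positivity))
    (by simp only [neg_nonpos, one_div, inv_nonneg]; exact hα.le)

lemma one_sub_div_lt_limitProfile (hα : 0 < α) {y : ℝ} (hy : 0 < y) :
    1 - y / (α + 1) < limitProfile α y := by
  rw [limitProfile, mul_div_assoc]
  exact one_sub_lt_one_add_mul_rpow_neg_inv hα (by positivity)

lemma limitProfile_sub_mul_rpow_lt (hα : 0 < α) {y c : ℝ} (hy : 0 ≤ y) (hc : 0 < c) :
    limitProfile α y - c * limitProfile α y ^ (α + 1) < limitProfile α (y + (α + 1) * c) := by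
  obtain ⟨A, hA⟩ : ∃ A, A = 1 + α * y / (α + 1) := ⟨_, rfl⟩
  have hA0 : 0 < A := by rw [hA]; positivity
  have hfy : limitProfile α y = A ^ (-(1 / α)) := by rw [limitProfile, hA]
  have hpow : (A ^ (-(1 / α))) ^ (α + 1) = A ^ (-(1 / α)) / A := by
    have : -(1 / α) * (α + 1) = -(1 / α) - 1 := by field_simp; ring
    rw [← rpow_mul hA0.le, this, rpow_sub_one hA0.ne']
  -- `t = c / A` scales the claim to `1 - t < (1 + α t) ^ (-1/α)`
  have hfz : limitProfile α (y + (α + 1) * c) =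
      A ^ (-(1 / α)) * (1 + α * (c / A)) ^ (-(1 / α)) := by
    rw [limitProfile, ← mul_rpow hA0.le (by positivity)]
    congr 1
    rw [hA]
    field_simp
    ring
  rw [hfy, hfz, hpow]
  calc A ^ (-(1 / α)) - c * (A ^ (-(1 / α)) / A) = A ^ (-(1 / α)) * (1 - c / A) := by ring
    _ < A ^ (-(1 / α)) * (1 + α * (c / A)) ^ (-(1 / α)) :=
      mul_lt_mul_of_pos_left (one_sub_lt_one_add_mul_rpow_neg_inv hα (by positivity))
        (rpow_pos_of_pos hA0 _)

lemma strictMonoOn_sub_mul_rpow (hα : 0 < α) {c : ℝ} (hc1 : c * (α + 1) ≤ 1) :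
    StrictMonoOn (fun x : ℝ => x - c * x ^ (α + 1)) (Icc 0 1) := by
  have hderiv : ∀ x : ℝ, HasDerivAt (fun x : ℝ => x - c * x ^ (α + 1))
      (1 - c * ((α + 1) * x ^ α)) x := fun x => by
    have := (hasDerivAt_rpow_const (x := x) (p := α + 1) (Or.inr (by linarith))).const_mul c
    rw [add_sub_cancel_right] at this
    exact (hasDerivAt_id' x).sub this
  refine strictMonoOn_of_deriv_pos (convex_Icc 0 1)
    (fun x _ => (hderiv x).continuousAt.continuousWithinAt) fun x hx => ?_
  rw [interior_Icc] at hx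
  have hxα : x ^ α < 1 := rpow_lt_one hx.1.le hx.2 hα
  rw [(hderiv x).deriv]
  nlinarith [rpow_nonneg hx.1.le α]

lemma sub_mul_rpow_mem_Ico_limitProfile (hα : 0 < α) {y c a : ℝ} (hy : 0 ≤ y) (hc : 0 < c)
    (hc1 : c * (α + 1) ≤ 1) (ha : a ∈ Ico 0 (limitProfile α y)) :
    a - c * a ^ (α + 1) ∈ Ico 0 (limitProfile α (y + (α + 1) * c)) := by
  have hmono := strictMonoOn_sub_mul_rpow hα hc1
  have hfy : limitProfile α y ∈ Icc (0 : ℝ) 1 :=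
    ⟨(limitProfile_pos hα hy).le, limitProfile_le_one hα hy⟩
  have haI : a ∈ Icc (0 : ℝ) 1 := ⟨ha.1, ha.2.le.trans hfy.2⟩
  constructor
  · have := hmono.monotoneOn ⟨le_rfl, zero_le_one⟩ haI ha.1
    simpa [zero_rpow (by linarith : α + 1 ≠ 0)] using this
  · exact (hmono haI hfy ha.2).trans (limitProfile_sub_mul_rpow_lt hα hy hc)

end

theorem stmt5 (α : ℝ) (hα : 0 < α) (f : ℝ → ℝ)
    (hf : ∀ y, f y = (1 + α * y / (α + 1)) ^ (-(1 / α)))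
    (fn : ℕ → ℝ → ℝ)
    (hfn1 : ∀ y, fn 1 y = 1 - y / (α + 1))
    (hfnrec : ∀ n : ℕ, 1 ≤ n → ∀ y : ℝ, 0 < y → y ≤ n →
      fn (n + 1) ((1 + 1 / n) * y) = fn n y - (y / ((α + 1) * n)) * (fn n y) ^ (α + 1)) :
    ∀ n : ℕ, 1 ≤ n → ∀ y : ℝ, 0 < y → y ≤ n → fn n y < f y := by
  obtain rfl : f = limitProfile α := funext hf
  suffices H : ∀ n : ℕ, 1 ≤ n → ∀ y : ℝ, 0 < y → y ≤ n → fn n y ∈ Ico 0 (limitProfile α y)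
    from fun n hn y hy hyn => (H n hn y hy hyn).2
  intro n hn
  induction n, hn using Nat.le_induction with
  | base =>
    intro y hy hy1
    rw [hfn1]
    refine ⟨?_, one_sub_div_lt_limitProfile hα hy⟩
    rw [sub_nonneg, div_le_one (by linarith)]
    simp only [Nat.cast_one] at hy1
    linarith
  | succ n hn ih =>
    intro z hz hzn
    have hn0 : (0 : ℝ) < n := by exact_mod_cast hn
    obtain ⟨y, rfl⟩ : ∃ y, z = (1 + 1 / n) * y := ⟨n / (n + 1) * z, by field_simp⟩
    have hscale : (1 + 1 / (n : ℝ)) * y = (n + 1) * (y / n) := by field_simp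
    have hy : 0 < y := pos_of_mul_pos_right hz (by positivity)
    have hyn : y ≤ n := by
      rw [← div_le_one hn0]
      push_cast at hzn
      nlinarith
    have hc1 : y / ((α + 1) * n) * (α + 1) ≤ 1 := by
      rw [mul_comm (α + 1), ← div_div, div_mul_cancel₀ _ (by positivity), div_le_one hn0]
      exact hyn
    have hzy : (1 + 1 / n) * y = y + (α + 1) * (y / ((α + 1) * n)) := by field_simp
    rw [hfnrec n hn y hy hyn, hzy]
    exact sub_mul_rpow_mem_Ico_limitProfile hα hy.le (by positivity) hc1 (ih y hy hyn)
end

section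
/- With the same definitions, for all n ≥ 1 and 0 < y ≤ n, f(y) - f_n(y) < y/(2n), where f(y) = (1 + αy/(α+1))^{-1/α}. -/
/-!
Write `h = y / n`. The recursion says `f_{n+1} (y + h) = φ_h (f_n y)` for the Euler map
`φ_h x = x - h x^(α+1)/(α+1)`, which is strictly increasing on `[0, 1]` when `h ≤ 1`, and all
`f_n y` stay in `(0, 1]`. Since `f' = -f^(α+1)/(α+1)` and `f^(α+1)` is convex, the midpoint rule
underestimates the decrease of `f`:
`f s - f (s + h) ≥ h/(α+1) · f (s + h/2)^(α+1) ≥ h/(α+1) · (f s - h/2)^(α+1)`,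
the last step because `|f'| ≤ 1`. In other words `f (s + h) ≤ φ_h (f s - h/2) + h/2`, so by
monotonicity of `φ_h` the bound `f s - v < h/2` at one grid point passes to
`f (s + h) - φ_h v < h/2` at the next. Starting from `f 0 = 1 = v`, induction on `n` gives the
claim.
-/

open Real Set

theorem one_add_mul_self_le_rpow_one_add_of_nonpos {s p : ℝ} (hs : -1 < s) (hp : p ≤ 0) :
    1 + p * s ≤ (1 + s) ^ p := by
  have hs1 : 0 < 1 + s := by linarith
  have hlog : log (1 + s) ≤ s := by linarith [log_le_sub_one_of_pos hs1]
  calc 1 + p * s ≤ log (1 + s) * p + 1 := by nlinarith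
    _ ≤ exp (log (1 + s) * p) := add_one_le_exp _
    _ = (1 + s) ^ p := (rpow_def_of_pos hs1 p).symm

theorem rpow_add_mul_rpow_sub_one_le_rpow_add {p x y : ℝ} (hp : p ≤ 0) (hx : 0 < x)
    (hxy : 0 < x + y) : x ^ p + p * x ^ (p - 1) * y ≤ (x + y) ^ p := by
  have hyx : -1 < y / x := by rw [lt_div_iff₀ hx]; linarith
  have hbern := one_add_mul_self_le_rpow_one_add_of_nonpos hyx hp
  calc x ^ p + p * x ^ (p - 1) * y = x ^ p * (1 + p * (y / x)) := by
        rw [rpow_sub_one hx.ne']; field_simp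
    _ ≤ x ^ p * (1 + y / x) ^ p := by gcongr
    _ = (x + y) ^ p := by
        rw [← mul_rpow hx.le (by linarith)]
        congr 1; field_simp

theorem two_mul_rpow_le_rpow_sub_add_rpow_add {r m t : ℝ} (hr : r ≤ 0) (htm : |t| < m) :
    2 * m ^ r ≤ (m - t) ^ r + (m + t) ^ r := by
  obtain ⟨hmt, htm⟩ := abs_lt.mp htm
  have hm : 0 < m := by linarith
  have hminus := rpow_add_mul_rpow_sub_one_le_rpow_add (y := -t) hr hm (by linarith)
  have hplus := rpow_add_mul_rpow_sub_one_le_rpow_add (y := t) hr hm (by linarith)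
  rw [← sub_eq_add_neg] at hminus
  linarith

theorem two_mul_mul_rpow_le_rpow_sub_sub_rpow_add {q m d : ℝ} (hq : 0 ≤ q) (hd : 0 ≤ d)
    (hdm : d < m) : 2 * q * d * m ^ (-q - 1) ≤ (m - d) ^ (-q) - (m + d) ^ (-q) := by
  set g : ℝ → ℝ := fun t ↦ (m - t) ^ (-q) - (m + t) ^ (-q) - 2 * q * m ^ (-q - 1) * t
  have hderiv : ∀ t ∈ Icc 0 d, HasDerivAt g
      (q * ((m - t) ^ (-q - 1) + (m + t) ^ (-q - 1) - 2 * m ^ (-q - 1))) t := by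
    intro t ⟨ht0, htd⟩
    have hminus := ((hasDerivAt_id t).const_sub m).rpow_const (p := -q)
      (Or.inl (by simp only [id_eq, ne_eq]; linarith))
    have hplus := ((hasDerivAt_id t).const_add m).rpow_const (p := -q)
      (Or.inl (by simp only [id_eq, ne_eq]; linarith))
    have hlin := (hasDerivAt_id t).const_mul (2 * q * m ^ (-q - 1))
    refine ((hminus.sub hplus).sub hlin).congr_deriv ?_
    simp only [id]; ring
  have hmono : MonotoneOn g (Icc 0 d) := by
    refine monotoneOn_of_hasDerivWithinAt_nonneg (convex_Icc 0 d)
      (fun t ht ↦ (hderiv t ht).continuousAt.continuousWithinAt)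
      (fun t ht ↦ (hderiv t (interior_subset ht)).hasDerivWithinAt) fun t ht ↦ ?_
    rw [interior_Icc] at ht
    have := two_mul_rpow_le_rpow_sub_add_rpow_add (r := -q - 1) (m := m) (t := t)
      (by linarith) (by rw [abs_lt]; constructor <;> linarith [ht.1, ht.2])
    exact mul_nonneg hq (by linarith)
  have := hmono ⟨le_rfl, hd⟩ ⟨hd, le_rfl⟩ hd
  simp only [sub_zero, add_zero, sub_self, mul_zero, sub_nonneg, g] at this
  linarith

noncomputable def solution (α s : ℝ) : ℝ := (1 + α * s / (α + 1)) ^ (-(1 / α))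

/-- With step `h = y / n`, the recursion of `f_n` reads `f_{n+1} (y + h) = eulerStep α h (f_n y)`:
one explicit Euler step for `f' = -f^(α+1)/(α+1)`. -/
noncomputable def eulerStep (α h x : ℝ) : ℝ := x - h / (α + 1) * x ^ (α + 1)

section

variable {α : ℝ}

theorem solution_zero : solution α 0 = 1 := by simp [solution]

theorem solution_antitoneOn (hα : 0 < α) : AntitoneOn (solution α) (Ici 0) := by
  intro s (hs : 0 ≤ s) t _ hst
  have : 0 ≤ α * s / (α + 1) := by positivity
  exact rpow_le_rpow_of_nonpos (by linarith) (by gcongr) (by simp only [neg_nonpos]; positivity)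

theorem solution_sub_le_solution_add (hα : 0 < α) {s t : ℝ} (hs : 0 ≤ s) (ht : 0 ≤ t) :
    solution α s - t ≤ solution α (s + t) := by
  set A := 1 + α * s / (α + 1)
  have hA : 1 ≤ A := le_add_of_nonneg_right (by positivity)
  have htan := rpow_add_mul_rpow_sub_one_le_rpow_add (p := -(1 / α)) (x := A)
    (y := α * t / (α + 1)) (by simp only [neg_nonpos]; positivity) (by linarith) (by positivity)
  have hpow : A ^ (-(1 / α) - 1) ≤ 1 :=
    rpow_le_one_of_one_le_of_nonpos hA (by linarith [show 0 < 1 / α by positivity])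
  have hcoef : -(1 / α) * A ^ (-(1 / α) - 1) * (α * t / (α + 1))
      = -(t / (α + 1) * A ^ (-(1 / α) - 1)) := by field_simp
  have hsmall : t / (α + 1) * A ^ (-(1 / α) - 1) ≤ t :=
    calc t / (α + 1) * A ^ (-(1 / α) - 1) ≤ t / (α + 1) :=
          mul_le_of_le_one_right (by positivity) hpow
      _ ≤ t := div_le_self ht (by linarith)
  have hA' : 1 + α * (s + t) / (α + 1) = A + α * t / (α + 1) := by ring
  rw [solution, solution, hA']
  linarith

theorem mul_solution_rpow_le_solution_sub (hα : 0 < α) {s h : ℝ} (hs : 0 ≤ s) (hh : 0 ≤ h) :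
    h / (α + 1) * solution α (s + h / 2) ^ (α + 1) ≤ solution α s - solution α (s + h) := by
  set m := 1 + α * (s + h / 2) / (α + 1)
  set d := α * h / (α + 1) / 2
  have hsub : m - d = 1 + α * s / (α + 1) := by simp only [m, d]; ring
  have hadd : m + d = 1 + α * (s + h) / (α + 1) := by simp only [m, d]; ring
  have hdm : d < m := by
    have : 0 ≤ α * s / (α + 1) := by positivity
    have : 0 ≤ d := by positivity
    linarith
  have hexp : (m ^ (-(1 / α))) ^ (α + 1) = m ^ (-(1 / α) - 1) := by
    rw [← rpow_mul (by linarith [show 0 ≤ d by positivity])]; congr 1; field_simp; ring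
  have hcoef : 2 * (1 / α) * d = h / (α + 1) := by simp only [d]; field_simp
  have hmid := two_mul_mul_rpow_le_rpow_sub_sub_rpow_add (q := 1 / α) (by positivity)
    (by positivity) hdm
  rw [solution, solution, solution, hexp, ← hsub, ← hadd, ← hcoef]
  exact hmid

theorem solution_add_le_eulerStep (hα : 0 < α) {s h : ℝ} (hs : 0 ≤ s) (hh : 0 ≤ h)
    (hθ : h / 2 ≤ solution α s) :
    solution α (s + h) ≤ eulerStep α h (solution α s - h / 2) + h / 2 := by
  have hmid := solution_sub_le_solution_add hα hs (t := h / 2) (by positivity)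
  have hpow : (solution α s - h / 2) ^ (α + 1) ≤ solution α (s + h / 2) ^ (α + 1) :=
    rpow_le_rpow (by linarith) hmid (by linarith)
  have := mul_solution_rpow_le_solution_sub hα hs hh
  have : h / (α + 1) * (solution α s - h / 2) ^ (α + 1)
      ≤ h / (α + 1) * solution α (s + h / 2) ^ (α + 1) := by gcongr
  rw [eulerStep]
  linarith

theorem eulerStep_strictMonoOn (hα : 0 < α) {h : ℝ} (hh : h ≤ 1) :
    StrictMonoOn (eulerStep α h) (Icc 0 1) := by
  have hderiv : ∀ x, 0 < x → HasDerivAt (eulerStep α h) (1 - h * x ^ α) x := by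
    intro x hx
    have := ((hasDerivAt_id x).rpow_const (p := α + 1) (Or.inl hx.ne')).const_mul (h / (α + 1))
    refine ((hasDerivAt_id x).sub this).congr_deriv ?_
    simp only [id, add_sub_cancel_right]
    field_simp
  refine strictMonoOn_of_hasDerivWithinAt_pos (convex_Icc 0 1) ?_
    (fun x hx ↦ (hderiv x (by rw [interior_Icc] at hx; exact hx.1)).hasDerivWithinAt)
    fun x hx ↦ ?_
  · unfold eulerStep
    exact (continuous_id.sub (continuous_const.mul
      (continuous_rpow_const (by linarith)))).continuousOn
  · rw [interior_Icc] at hx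
    have h1 : x ^ α < 1 := rpow_lt_one hx.1.le hx.2 hα
    have h0 : 0 < x ^ α := rpow_pos_of_pos hx.1 α
    nlinarith

theorem eulerStep_mem_Ioc (hα : 0 < α) {h x : ℝ} (hh0 : 0 ≤ h) (hh1 : h ≤ 1)
    (hx : x ∈ Ioc 0 1) : eulerStep α h x ∈ Ioc 0 1 := by
  have hzero : eulerStep α h 0 = 0 := by simp [eulerStep, zero_rpow (by linarith : α + 1 ≠ 0)]
  refine ⟨hzero ▸ eulerStep_strictMonoOn hα hh1 ⟨le_rfl, zero_le_one⟩
    (Ioc_subset_Icc_self hx) hx.1, ?_⟩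
  have : 0 ≤ h / (α + 1) * x ^ (α + 1) := by have := hx.1.le; positivity
  rw [eulerStep]
  linarith [hx.2]

theorem solution_sub_eulerStep_lt (hα : 0 < α) {s h v : ℝ} (hs : 0 ≤ s) (hh0 : 0 ≤ h)
    (hh1 : h ≤ 1) (hv : v ∈ Ioc 0 1) (herr : solution α s - v < h / 2) :
    solution α (s + h) - eulerStep α h v < h / 2 := by
  rcases lt_or_ge (solution α s) (h / 2) with hsmall | hθ
  · have := solution_antitoneOn hα hs (show 0 ≤ s + h by positivity) (by linarith)
    linarith [(eulerStep_mem_Ioc hα hh0 hh1 hv).1]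
  · have hmono : eulerStep α h (solution α s - h / 2) < eulerStep α h v :=
      eulerStep_strictMonoOn hα hh1 ⟨by linarith, by linarith [hv.2]⟩ (Ioc_subset_Icc_self hv)
        (by linarith)
    linarith [solution_add_le_eulerStep hα hs hh0 hθ]

theorem mem_Ioc_and_solution_sub_lt_of_euler_recursion (hα : 0 < α) (fn : ℕ → ℝ → ℝ)
    (hfn1 : ∀ y, fn 1 y = 1 - y / (α + 1))
    (hfnrec : ∀ n : ℕ, 1 ≤ n → ∀ y : ℝ, 0 < y → y ≤ n →
      fn (n + 1) ((1 + 1 / n) * y) = fn n y - (y / ((α + 1) * n)) * (fn n y) ^ (α + 1)) :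
    ∀ n : ℕ, 1 ≤ n → ∀ y : ℝ, 0 < y → y ≤ n →
      fn n y ∈ Ioc 0 1 ∧ solution α y - fn n y < y / n / 2 := by
  intro n hn
  induction n, hn using Nat.le_induction with
  | base =>
    intro y hy hy1
    have hy1 : y ≤ 1 := by exact_mod_cast hy1
    have hfn : fn 1 y = eulerStep α y 1 := by simp [hfn1, eulerStep]
    have hstart : solution α 0 - 1 < y / 2 := by rw [solution_zero]; linarith
    rw [hfn, Nat.cast_one, div_one]
    refine ⟨eulerStep_mem_Ioc hα hy.le hy1 ⟨one_pos, le_rfl⟩, ?_⟩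
    simpa only [zero_add] using
      solution_sub_eulerStep_lt hα le_rfl hy.le hy1 ⟨one_pos, le_rfl⟩ hstart
  | succ n hn1 ih =>
    intro z hz hzn
    have hn : (0 : ℝ) < n := by exact_mod_cast hn1
    set y := n / (n + 1) * z
    have hy : 0 < y := by positivity
    have hyn : y ≤ n := by
      push_cast at hzn
      simp only [y]; rw [div_mul_eq_mul_div, div_le_iff₀ (by positivity)]; nlinarith
    have hzy : z = y + y / n := by simp only [y]; field_simp
    have hstep : y / n = z / ↑(n + 1) := by simp only [y]; push_cast; field_simp
    have hfn : fn (n + 1) z = eulerStep α (y / n) (fn n y) := by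
      rw [show z = (1 + 1 / n) * y by rw [hzy]; ring, hfnrec n hn1 y hy hyn, eulerStep]
      field_simp
    obtain ⟨hv, herr⟩ := ih y hy hyn
    have hh1 : y / n ≤ 1 := by rwa [div_le_one hn]
    rw [hfn, ← hstep]
    refine ⟨eulerStep_mem_Ioc hα (by positivity) hh1 hv, ?_⟩
    nth_rewrite 1 [hzy]
    exact solution_sub_eulerStep_lt hα hy.le (by positivity) hh1 hv herr

end

theorem stmt6 (α : ℝ) (hα : 0 < α) (f : ℝ → ℝ)
    (hf : ∀ y, f y = (1 + α * y / (α + 1)) ^ (-(1 / α)))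
    (fn : ℕ → ℝ → ℝ)
    (hfn1 : ∀ y, fn 1 y = 1 - y / (α + 1))
    (hfnrec : ∀ n : ℕ, 1 ≤ n → ∀ y : ℝ, 0 < y → y ≤ n →
      fn (n + 1) ((1 + 1 / n) * y) = fn n y - (y / ((α + 1) * n)) * (fn n y) ^ (α + 1)) :
    ∀ n : ℕ, 1 ≤ n → ∀ y : ℝ, 0 < y → y ≤ n → f y - fn n y < y / (2 * n) := by
  intro n hn y hy hyn
  rw [hf, ← div_div, div_right_comm]
  exact (mem_Ioc_and_solution_sub_lt_of_euler_recursion hα fn hfn1 hfnrec n hn y hy hyn).2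
end

section
/- Let α > 0 and h(y) = (y/(1 + αy/(α+1)))^{1/α} for y ≥ 0, and H(y) = ∫₀^y h(u)du + (1/α − y)h(y). Then there exists a unique b_α > 1/α with H(b_α) = 0, and moreover h(b_α)^α < 1 + 1/α. -/
/-!
Write `h y = (K y / (y + K)) ^ p` with `K = 1 + 1/α` and `p = 1/α`, and `s = 1/α`.
For `s < x < y` one has `H y - H x = ∫_x^y (h - h y) + (s - x) (h y - h x) < 0` as `h` increases,
so `H` is injective past `s`, while `H s = ∫₀^s h > 0`. By Bernoulli's inequality
`h u = K^p (1 - K/(u + K))^p = K^p - Θ(1/(u + K))`, which integrates to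
`H y ≤ C - c log ((y + K)/K) → -∞`; the intermediate value theorem then gives the zero `b`.
Finally `h b ^ α = K b / (b + K) < K`.
-/

open Real Set Filter intervalIntegral MeasureTheory

lemma min_one_mul_one_sub_le_one_sub_rpow {p t : ℝ} (hp : 0 ≤ p) (ht₀ : 0 ≤ t) (ht₁ : t ≤ 1) :
    min 1 p * (1 - t) ≤ 1 - t ^ p := by
  rcases le_total p 1 with hp₁ | hp₁
  · have := rpow_one_add_le_one_add_mul_self (s := t - 1) (by linarith) hp hp₁
    rw [add_sub_cancel] at this
    rw [min_eq_right hp₁]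
    linarith
  · have := rpow_le_self_of_le_one ht₀ ht₁ hp₁
    rw [min_eq_left hp₁]
    linarith

lemma one_sub_rpow_le_max_one_mul_one_sub {p t : ℝ} (ht₀ : 0 ≤ t) (ht₁ : t ≤ 1) :
    1 - t ^ p ≤ max 1 p * (1 - t) := by
  rcases le_total p 1 with hp₁ | hp₁
  · have := self_le_rpow_of_le_one ht₀ ht₁ hp₁
    rw [max_eq_left hp₁]
    linarith
  · have := one_add_mul_self_le_rpow_one_add (s := t - 1) (by linarith) hp₁
    rw [add_sub_cancel] at this
    rw [max_eq_right hp₁]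
    linarith

lemma MonotoneOn.intervalIntegrable_of_Ici {φ : ℝ → ℝ} (hφ : MonotoneOn φ (Ici 0)) {a b : ℝ}
    (ha : 0 ≤ a) (hab : a ≤ b) : IntervalIntegrable φ volume a b :=
  (hφ.mono (by rw [uIcc_of_le hab]; exact Icc_subset_Ici_iff hab |>.2 ha)).intervalIntegrable

noncomputable def areaGap (φ : ℝ → ℝ) (s y : ℝ) : ℝ :=
  (∫ u in (0 : ℝ)..y, φ u) + (s - y) * φ y

section areaGap

variable {φ : ℝ → ℝ} {s : ℝ}

lemma areaGap_strictAntiOn (hφ : StrictMonoOn φ (Ici 0)) (hs : 0 ≤ s) :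
    StrictAntiOn (areaGap φ s) (Ioi s) := by
  intro x hx y _ hxy
  have hx₀ : 0 ≤ x := hs.trans (le_of_lt hx)
  have hφxy : φ x < φ y := hφ hx₀ (hx₀.trans hxy.le) hxy
  have hint : ∫ u in x..y, φ u ≤ (y - x) * φ y := by
    simpa using integral_mono_on hxy.le (hφ.monotoneOn.intervalIntegrable_of_Ici hx₀ hxy.le)
      intervalIntegrable_const fun u hu =>
        hφ.monotoneOn (hx₀.trans hu.1) (hx₀.trans hxy.le) hu.2
  rw [areaGap, areaGap, ← integral_add_adjacent_intervals
    (hφ.monotoneOn.intervalIntegrable_of_Ici le_rfl hx₀)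
    (hφ.monotoneOn.intervalIntegrable_of_Ici hx₀ hxy.le)]
  nlinarith [mul_pos (sub_pos.2 (show s < x from hx)) (sub_pos.2 hφxy)]

lemma areaGap_self_pos (hφ : StrictMonoOn φ (Ici 0)) (hφ₀ : 0 ≤ φ 0) (hs : 0 < s) :
    0 < areaGap φ s s := by
  rw [areaGap, sub_self, zero_mul, add_zero]
  exact intervalIntegral_pos_of_pos_on (hφ.monotoneOn.intervalIntegrable_of_Ici le_rfl hs.le)
    (fun u hu => hφ₀.trans_lt (hφ self_mem_Ici (le_of_lt hu.1) hu.1)) hs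

lemma continuousOn_areaGap (hφ : ContinuousOn φ (Ici 0)) {T : ℝ} (hT : 0 ≤ T) :
    ContinuousOn (areaGap φ s) (Icc 0 T) := by
  have hφT : ContinuousOn φ (Icc 0 T) := hφ.mono Icc_subset_Ici_self
  have hprim := continuousOn_primitive_interval (μ := volume) (a := 0) (b := T)
    (by rw [uIcc_of_le hT]; exact hφT.integrableOn_Icc)
  rw [uIcc_of_le hT] at hprim
  exact hprim.add ((continuousOn_const.sub continuousOn_id).mul hφT)

theorem existsUnique_areaGap_eq_zero (hφc : ContinuousOn φ (Ici 0))
    (hφ : StrictMonoOn φ (Ici 0)) (hφ₀ : 0 ≤ φ 0) (hs : 0 < s)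
    (hlim : Tendsto (areaGap φ s) atTop atBot) :
    ∃ b, s < b ∧ areaGap φ s b = 0 ∧ ∀ b', s < b' → areaGap φ s b' = 0 → b' = b := by
  obtain ⟨T, hT, hsT⟩ := ((hlim.eventually (eventually_lt_atBot 0)).and
    (eventually_ge_atTop s)).exists
  have hpos := areaGap_self_pos hφ hφ₀ hs
  obtain ⟨b, hb, hb₀⟩ : ∃ b ∈ Icc s T, areaGap φ s b = 0 :=
    intermediate_value_Icc' hsT ((continuousOn_areaGap hφc (hs.le.trans hsT)).mono
      (Icc_subset_Icc_left hs.le)) ⟨hT.le, hpos.le⟩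
  have hsb : s < b := hb.1.lt_of_ne (by rintro rfl; exact hpos.ne' hb₀)
  exact ⟨b, hsb, hb₀, fun b' hb' hb'₀ =>
    (areaGap_strictAntiOn hφ hs.le).injOn hb' hsb (hb'₀.trans hb₀.symm)⟩

end areaGap

noncomputable def satPow (K p y : ℝ) : ℝ := (K * y / (y + K)) ^ p

section satPow

variable {K p : ℝ}

lemma strictMonoOn_satPow (hK : 0 < K) (hp : 0 < p) : StrictMonoOn (satPow K p) (Ici 0) := by
  intro x (hx : 0 ≤ x) y (hy : 0 ≤ y) hxy
  refine rpow_lt_rpow (by positivity) ?_ hp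
  rw [div_lt_div_iff₀ (by positivity) (by positivity)]
  nlinarith [mul_pos (mul_pos hK hK) (sub_pos.2 hxy)]

lemma continuousOn_satPow (hK : 0 < K) (hp : 0 ≤ p) : ContinuousOn (satPow K p) (Ici 0) := by
  refine ContinuousOn.rpow_const ?_ fun _ _ => Or.inr hp
  exact (continuousOn_const.mul continuousOn_id).div (continuousOn_id.add continuousOn_const)
    fun y (hy : 0 ≤ y) => by positivity

lemma satPow_eq_mul_rpow {y : ℝ} (hK : 0 < K) (hy : 0 ≤ y) :
    satPow K p y = K ^ p * (1 - K / (y + K)) ^ p := by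
  rw [satPow, ← mul_rpow hK.le]
  · congr 1
    field_simp
    ring
  · rw [sub_nonneg, div_le_one (by positivity)]
    linarith

lemma satPow_le {y : ℝ} (hK : 0 < K) (hp : 0 ≤ p) (hy : 0 ≤ y) :
    satPow K p y ≤ K ^ p - K ^ p * min 1 p * (K / (y + K)) := by
  have hq : 0 ≤ K / (y + K) := by positivity
  have hq₁ : K / (y + K) ≤ 1 := by rw [div_le_one (by positivity)]; linarith
  have h := min_one_mul_one_sub_le_one_sub_rpow hp (sub_nonneg.2 hq₁) (by linarith)
  rw [sub_sub_cancel] at h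
  rw [satPow_eq_mul_rpow hK hy]
  nlinarith [mul_le_mul_of_nonneg_left h (rpow_nonneg hK.le p)]

lemma le_satPow {y : ℝ} (hK : 0 < K) (hy : 0 ≤ y) :
    K ^ p - K ^ p * max 1 p * (K / (y + K)) ≤ satPow K p y := by
  have hq : 0 ≤ K / (y + K) := by positivity
  have hq₁ : K / (y + K) ≤ 1 := by rw [div_le_one (by positivity)]; linarith
  have h := one_sub_rpow_le_max_one_mul_one_sub (p := p) (sub_nonneg.2 hq₁) (by linarith)
  rw [sub_sub_cancel] at h
  rw [satPow_eq_mul_rpow hK hy]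
  nlinarith [mul_le_mul_of_nonneg_left h (rpow_nonneg hK.le p)]

lemma integral_inv_add_right {T : ℝ} (hK : 0 < K) (hT : 0 ≤ T) :
    ∫ u in (0 : ℝ)..T, (u + K)⁻¹ = log ((T + K) / K) := by
  rw [integral_comp_add_right (fun x => x⁻¹), zero_add, integral_inv_of_pos hK (by linarith)]


lemma integral_satPow_le {T : ℝ} (hK : 0 < K) (hp : 0 ≤ p) (hT : 0 ≤ T) :
    ∫ u in (0 : ℝ)..T, satPow K p u ≤
      K ^ p * T - K ^ p * min 1 p * K * log ((T + K) / K) := by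
  have hinv : IntervalIntegrable (fun u : ℝ => (u + K)⁻¹) volume 0 T := by
    refine ContinuousOn.intervalIntegrable fun u hu => ?_
    rw [uIcc_of_le hT] at hu
    have : u + K ≠ 0 := by linarith [hu.1]
    fun_prop (disch := assumption)
  calc ∫ u in (0 : ℝ)..T, satPow K p u
      ≤ ∫ u in (0 : ℝ)..T, (K ^ p - K ^ p * min 1 p * K * (u + K)⁻¹) := by
        refine integral_mono_on hT ((continuousOn_satPow hK hp).mono ?_ |>.intervalIntegrable)
          (intervalIntegrable_const.sub (hinv.const_mul _)) fun u hu => ?_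
        · rw [uIcc_of_le hT]; exact Icc_subset_Ici_self
        · simpa only [mul_assoc, div_eq_mul_inv] using satPow_le hK hp hu.1
    _ = K ^ p * T - K ^ p * min 1 p * K * log ((T + K) / K) := by
        rw [integral_sub intervalIntegrable_const (hinv.const_mul _), intervalIntegral.integral_const_mul,
          integral_inv_add_right hK hT, intervalIntegral.integral_const, smul_eq_mul, sub_zero,
          mul_comm T]

lemma areaGap_satPow_le {s T : ℝ} (hK : 0 < K) (hp : 0 ≤ p) (hs : 0 ≤ s) (hsT : s ≤ T) :
    areaGap (satPow K p) s T ≤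
      K ^ p * (s + max 1 p * K) - K ^ p * min 1 p * K * log ((T + K) / K) := by
  have hT : 0 ≤ T := hs.trans hsT
  have hprod : (s - T) * satPow K p T ≤ (s - T) * (K ^ p - K ^ p * max 1 p * (K / (T + K))) :=
    mul_le_mul_of_nonpos_left (le_satPow hK hT) (by linarith)
  have hfrac : (T - s) * (K / (T + K)) ≤ K := by
    rw [mul_div_assoc', div_le_iff₀ (by positivity)]
    nlinarith
  have hc : 0 ≤ K ^ p * max 1 p := by positivity
  rw [areaGap]
  nlinarith [integral_satPow_le hK hp hT, mul_le_mul_of_nonneg_left hfrac hc]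

lemma tendsto_areaGap_satPow_atBot {s : ℝ} (hK : 0 < K) (hp : 0 < p) (hs : 0 ≤ s) :
    Tendsto (areaGap (satPow K p) s) atTop atBot := by
  have hlog : Tendsto (fun T => log ((T + K) / K)) atTop atTop :=
    tendsto_log_atTop.comp ((tendsto_atTop_add_const_right _ K tendsto_id).atTop_div_const hK)
  have hcoef : -(K ^ p * min 1 p * K) < 0 := by
    have : 0 < min 1 p := lt_min one_pos hp
    simp only [neg_lt_zero]
    positivity
  refine tendsto_atBot_mono' _ ((eventually_ge_atTop s).mono fun T hsT =>
    areaGap_satPow_le hK hp.le hs hsT) ?_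
  simpa only [sub_eq_add_neg, neg_mul] using
    tendsto_atBot_add_const_left _ _ (hlog.const_mul_atTop_of_neg hcoef)

lemma satPow_rpow_inv_lt {y : ℝ} (hK : 0 < K) (hp : p ≠ 0) (hy : 0 ≤ y) :
    satPow K p y ^ p⁻¹ < K := by
  rw [satPow, rpow_rpow_inv (by positivity) hp, div_lt_iff₀ (by positivity)]
  nlinarith

end satPow

theorem stmt10 (α : ℝ) (hα : 0 < α) (h H : ℝ → ℝ)
    (hh : ∀ y, h y = (y / (1 + α * y / (α + 1))) ^ (1 / α))
    (hH : ∀ y, H y = (∫ u in (0:ℝ)..y, h u) + (1 / α - y) * h y) :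
    ∃ b : ℝ, 1 / α < b ∧ H b = 0 ∧ (h b) ^ α < 1 + 1 / α ∧
      ∀ b' : ℝ, 1 / α < b' → H b' = 0 → b' = b := by
  have hp : 0 < 1 / α := by positivity
  have hK : 0 < 1 + 1 / α := by positivity
  have hh' : h = satPow (1 + 1 / α) (1 / α) := funext fun y => by
    rw [hh, satPow]
    congr 1
    field_simp
    ring
  have hH' : H = areaGap (satPow (1 + 1 / α) (1 / α)) (1 / α) := funext fun y => by
    rw [hH, hh', areaGap]
  subst hh' hH'
  obtain ⟨b, hb, hb₀, hunique⟩ := existsUnique_areaGap_eq_zero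
    (continuousOn_satPow hK hp.le) (strictMonoOn_satPow hK hp) (rpow_nonneg (by simp) _) hp
    (tendsto_areaGap_satPow_atBot hK hp hp.le)
  refine ⟨b, hb, hb₀, ?_, hunique⟩
  simpa only [one_div, inv_inv] using satPow_rpow_inv_lt hK hp.ne' (hp.trans hb).le
end

section
/- Let α > 0 and h(y) = (y/(1 + αy/(α+1)))^{1/α}, H(y) = ∫₀^y h(u)du + (1/α − y)h(y). Then H(1 + 1/α) > 0; consequently the root b_α of H satisfies b_α > 1 + 1/α. -/
open intervalIntegral Real

lemma key11 (α b : ℝ) (hα : 0 < α) (h : ℝ → ℝ)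
    (hh : ∀ y, h y = (y / (1 + α * y / (α + 1))) ^ (1 / α))
    (hb : 0 < b) (hbc : b ≤ 1 + 1 / α) :
    0 < (∫ u in (0:ℝ)..b, h u) + (1 / α - b) * h b := by
  have hα1 : (0:ℝ) < α + 1 := by linarith
  have hia : (0:ℝ) < 1 / α := by positivity
  set D : ℝ := 1 + α * b / (α + 1) with hD
  have hD1 : (1:ℝ) < D := by
    have : 0 < α * b / (α + 1) := by positivity
    simp [hD]; linarith
  have hD0 : (0:ℝ) < D := by linarith
  -- denominator function
  have hden : ∀ u : ℝ, 0 ≤ u → (0:ℝ) < 1 + α * u / (α + 1) := fun u hu => by positivity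
  -- h is nonneg and positive at b
  have hhb_pos : 0 < h b := by
    rw [hh]
    exact Real.rpow_pos_of_pos (by positivity) _
  -- comparison function
  set g : ℝ → ℝ := fun u => (u / D) ^ (1 / α) with hg
  -- continuity
  have hrpow : Continuous fun x : ℝ => x ^ (1 / α) := by
    apply continuous_iff_continuousAt.2
    intro x
    exact Real.continuousAt_rpow_const x (1 / α) (Or.inr hia.le)
  have hgc : ContinuousOn g (Set.Icc 0 b) :=
    (hrpow.comp (continuous_id.div_const D)).continuousOn
  have hhc : ContinuousOn h (Set.Icc 0 b) := by
    have : ContinuousOn (fun u : ℝ => u / (1 + α * u / (α + 1))) (Set.Icc 0 b) := by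
      apply ContinuousOn.div continuousOn_id (by fun_prop)
      intro u hu
      exact (hden u hu.1).ne'
    have := hrpow.comp_continuousOn this
    apply this.congr
    intro u hu
    rw [hh]
    rfl
  -- pointwise inequality
  have hle : ∀ u ∈ Set.Ioc (0:ℝ) b, g u ≤ h u := by
    intro u hu
    rw [hh, hg]
    apply Real.rpow_le_rpow (div_nonneg hu.1.le hD0.le)
    · apply div_le_div_of_nonneg_left hu.1.le (hden u hu.1.le)
      have : α * u / (α + 1) ≤ α * b / (α + 1) := by
        apply div_le_div_of_nonneg_right _ hα1.le
        nlinarith [hu.2]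
      linarith
    · positivity
  have hlt : ∃ c ∈ Set.Icc (0:ℝ) b, g c < h c := by
    refine ⟨b / 2, ⟨by positivity, by linarith⟩, ?_⟩
    rw [hh, hg]
    apply Real.rpow_lt_rpow (by positivity) _ hia
    apply div_lt_div_of_pos_left (by positivity) (hden _ (by positivity))
    have : α * (b / 2) / (α + 1) < α * b / (α + 1) := by
      apply div_lt_div_of_pos_right _ hα1
      nlinarith
    linarith
  have hint : (∫ u in (0:ℝ)..b, g u) < ∫ u in (0:ℝ)..b, h u :=
    integral_lt_integral_of_continuousOn_of_le_of_exists_lt hb hgc hhc hle hlt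
  -- compute ∫ g
  have hval : (∫ u in (0:ℝ)..b, g u) = h b * b / (1 / α + 1) := by
    have hcongr : (∫ u in (0:ℝ)..b, g u) = ∫ u in (0:ℝ)..b, u ^ (1 / α) / D ^ (1 / α) := by
      apply intervalIntegral.integral_congr
      intro u hu
      rw [Set.uIcc_of_le hb.le] at hu
      simp only [hg]
      rw [Real.div_rpow hu.1 hD0.le]
    rw [hcongr, intervalIntegral.integral_div, integral_rpow (Or.inl (by linarith))]
    rw [Real.zero_rpow (by positivity)]
    rw [hh]
    have : (b / D) ^ (1 / α) = b ^ (1 / α) / D ^ (1 / α) := Real.div_rpow hb.le hD0.le _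
    rw [this]
    rw [Real.rpow_add hb (1/α) 1, Real.rpow_one]
    field_simp
    ring
  -- combine
  have hfac : 0 ≤ h b * b / (1 / α + 1) + (1 / α - b) * h b := by
    have h1 : h b * b / (1 / α + 1) + (1 / α - b) * h b
        = h b * (1 / α) * (1 - b / (1 + 1 / α)) := by
      field_simp
      ring
    rw [h1]
    have : 0 ≤ 1 - b / (1 + 1 / α) := by
      rw [sub_nonneg, div_le_one (by positivity)]
      exact hbc
    positivity
  calc 0 ≤ h b * b / (1 / α + 1) + (1 / α - b) * h b := hfac
    _ < (∫ u in (0:ℝ)..b, h u) + (1 / α - b) * h b := by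
        rw [← hval]; linarith

theorem stmt11 (α : ℝ) (hα : 0 < α) (h H : ℝ → ℝ)
    (hh : ∀ y, h y = (y / (1 + α * y / (α + 1))) ^ (1 / α))
    (hH : ∀ y, H y = (∫ u in (0:ℝ)..y, h u) + (1 / α - y) * h y) :
    0 < H (1 + 1 / α) ∧
      ∀ b : ℝ, 1 / α < b → H b = 0 → 1 + 1 / α < b := by
  have hia : (0:ℝ) < 1 / α := by positivity
  constructor
  · rw [hH]
    exact key11 α (1 + 1 / α) hα h hh (by linarith) le_rfl
  · intro b hb hHb
    by_contra hle
    push_neg at hle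
    have := key11 α b hα h hh (by linarith) hle
    rw [hH] at hHb
    linarith
end

section
/- Let α > 0, q satisfy: q(0)=0, q non-decreasing on [0,∞) and strictly increasing and differentiable on (0,A) with 1/α < A ≤ ∞, and suppose Q(y) = ∫₀^y q(u)du + (1/α − y)q(y) has a unique root b ∈ (1/α, A). Let m ≥ 1, c > 0, and define Z_m = c and (n/(n+1))^{1/α} Z_{n+1} = (1/n)∫₀^n (q(y) ∧ Z_n) dy for n ≥ m. Then lim_{n→∞} Z_n = q(b). -/
/-!
Write `β = 1/α` and `F_n(z) = (1 + 1/n)^β · (1/n) ∫₀ⁿ min(q, z)` (`recStep q β n z`), so that `Z_{n+1} = F_n(Z_n)`.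
For `z = q T` the integral equals `∫₀ᵀ q + (n - T) q T`, and since `n((1 + 1/n)^β - 1) → β`,
`n (F_n(q T) - q T) → Q(T)`. Monotonicity of `q` makes `Q` antitone on `[β, ∞)`, so `Q > 0` on
`(β, b)` and `Q < 0` on `(b, ∞)`. Hence above a level `q T` with `T > b` the sequence drops by at
least `δ/n` per step, and below a level `q T` with `β < T < b` it grows by a factor `1 + γ/n`; as
the harmonic series diverges, `Z_n` is eventually trapped between these two levels, which can be
taken arbitrarily close to `q b` by continuity of `q` at `b`.
-/

open Filter MeasureTheory Set

theorem eventually_of_frequently_of_eventually_succ {P : ℕ → Prop} (hP : ∃ᶠ n in atTop, P n)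
    (hstep : ∀ᶠ n in atTop, P n → P (n + 1)) : ∀ᶠ n in atTop, P n := by
  obtain ⟨N, hN⟩ := eventually_atTop.1 hstep
  obtain ⟨n₀, hNn₀, hn₀⟩ := frequently_atTop.1 hP N
  filter_upwards [eventually_ge_atTop n₀] with n hn
  induction n, hn using Nat.le_induction with
  | base => exact hn₀
  | succ n hn ih => exact hN n (hNn₀.trans hn) ih

/-- Harmonic increments add up to `δ log n`. -/
theorem tendsto_atTop_of_eventually_add_div_le {Z : ℕ → ℝ} {δ : ℝ} (hδ : 0 < δ)
    (h : ∀ᶠ n : ℕ in atTop, Z n + δ / n ≤ Z (n + 1)) : Tendsto Z atTop atTop := by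
  obtain ⟨N, hN⟩ := eventually_atTop.1 (h.and (eventually_ge_atTop 1))
  have hlog : ∀ n ≥ N, Z N + δ * (Real.log n - Real.log N) ≤ Z n := by
    intro n hn
    induction n, hn using Nat.le_induction with
    | base => simp
    | succ n hn ih =>
      obtain ⟨hstep, hn1⟩ := hN n hn
      have hn0 : (0 : ℝ) < n := by exact_mod_cast hn1
      have hlog_succ : Real.log (n + 1 : ℕ) - Real.log n ≤ 1 / n := by
        rw [← Real.log_div (by positivity) hn0.ne']
        calc Real.log ((n + 1 : ℕ) / n) ≤ (n + 1 : ℕ) / n - 1 :=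
              Real.log_le_sub_one_of_pos (by positivity)
          _ = 1 / n := by push_cast; field_simp; ring
      calc Z N + δ * (Real.log (n + 1 : ℕ) - Real.log N)
          ≤ Z N + δ * (Real.log n - Real.log N) + δ * (1 / n) := by nlinarith
        _ ≤ Z (n + 1) := by rw [mul_one_div]; linarith
  refine tendsto_atTop_mono' atTop (eventually_atTop.2 ⟨N, hlog⟩) ?_
  refine tendsto_atTop_add_const_left _ _ ?_
  exact Tendsto.const_mul_atTop hδ (tendsto_atTop_add_const_right _ _
    (Real.tendsto_log_atTop.comp tendsto_natCast_atTop_atTop))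

theorem eventually_le_of_eventually_le_sub_div {Z : ℕ → ℝ} {w δ : ℝ} (hδ : 0 < δ)
    (h : ∀ᶠ n : ℕ in atTop, (Z n ≤ w → Z (n + 1) ≤ w) ∧ (w < Z n → Z (n + 1) ≤ Z n - δ / n)) :
    ∀ᶠ n in atTop, Z n ≤ w := by
  refine eventually_of_frequently_of_eventually_succ ?_ (h.mono fun n hn => hn.1)
  by_contra hfreq
  have hgt : ∀ᶠ n in atTop, w < Z n := (not_frequently.1 hfreq).mono fun n hn => not_le.1 hn
  have hneg : Tendsto (fun n => -Z n) atTop atTop :=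
    tendsto_atTop_of_eventually_add_div_le hδ <| (h.and hgt).mono fun n hn => by
      linarith [hn.1.2 hn.2]
  obtain ⟨n, hn, hwn⟩ := ((hneg.eventually_ge_atTop (-w)).and hgt).exists
  linarith

theorem eventually_ge_of_eventually_mul_one_add_div_le {Z : ℕ → ℝ} {w γ : ℝ} (hγ : 0 < γ)
    (h : ∀ᶠ n : ℕ in atTop, 0 < Z n ∧ (w ≤ Z n → w ≤ Z (n + 1)) ∧
      (Z n < w → Z n * (1 + γ / n) ≤ Z (n + 1))) :
    ∀ᶠ n in atTop, w ≤ Z n := by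
  refine eventually_of_frequently_of_eventually_succ ?_ (h.mono fun n hn => hn.2.1)
  by_contra hfreq
  have hlt : ∀ᶠ n in atTop, Z n < w := (not_frequently.1 hfreq).mono fun n hn => not_le.1 hn
  obtain ⟨N, hN⟩ := eventually_atTop.1 ((h.and hlt).and (eventually_ge_atTop 1))
  have hgrow : ∀ n ≥ N, Z n + γ * Z n / n ≤ Z (n + 1) := fun n hn => by
    obtain ⟨⟨⟨-, -, hmul⟩, hlt⟩, -⟩ := hN n hn
    linarith [hmul hlt, show Z n * (1 + γ / n) = Z n + γ * Z n / n by ring]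
  have hmono : ∀ n ≥ N, Z N ≤ Z n := by
    intro n hn
    induction n, hn using Nat.le_induction with
    | base => exact le_rfl
    | succ n hn ih =>
      have hZn := (hN n hn).1.1.1
      have : 0 ≤ γ * Z n / n := by positivity
      linarith [hgrow n hn]
  have hZN := (hN N le_rfl).1.1.1
  have htend : Tendsto Z atTop atTop :=
    tendsto_atTop_of_eventually_add_div_le (mul_pos hγ hZN) <|
      eventually_atTop.2 ⟨N, fun n hn => by
        have hn0 : (0 : ℝ) ≤ n := n.cast_nonneg
        have : γ * Z N / n ≤ γ * Z n / n := by gcongr; exact hmono n hn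
        linarith [hgrow n hn]⟩
  obtain ⟨n, hn, hwn⟩ := ((htend.eventually_ge_atTop w).and hlt).exists
  linarith

section TruncatedIntegral

variable {q : ℝ → ℝ}

theorem pos_of_strictMonoOn_Ioc (hq : MonotoneOn q (Ici 0))
    (hq_nonneg : ∀ y, 0 ≤ y → 0 ≤ q y) {b : ℝ} (hb : 0 < b) (hq_strict : StrictMonoOn q (Ioc 0 b))
    (y : ℝ) (hy : 0 < y) : 0 < q y := by
  have hs : 0 < min y b := lt_min hy hb
  calc 0 ≤ q (min y b / 2) := hq_nonneg _ (by positivity)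
    _ < q (min y b) := hq_strict ⟨by positivity, by linarith [min_le_right y b]⟩
        ⟨hs, min_le_right y b⟩ (by linarith)
    _ ≤ q y := hq hs.le hy.le (min_le_left y b)

theorem intervalIntegrable_min_of_monotoneOn (hq : MonotoneOn q (Ici 0)) (z : ℝ) {a b : ℝ}
    (ha : 0 ≤ a) (hb : 0 ≤ b) : IntervalIntegrable (fun y => min (q y) z) volume a b := by
  refine MonotoneOn.intervalIntegrable fun x hx y hy hxy => min_le_min_right z ?_
  exact hq (le_trans (le_min ha hb) hx.1) (le_trans (le_min ha hb) hy.1) hxy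

theorem intervalIntegrable_of_monotoneOn (hq : MonotoneOn q (Ici 0)) {a b : ℝ}
    (ha : 0 ≤ a) (hb : 0 ≤ b) : IntervalIntegrable q volume a b :=
  MonotoneOn.intervalIntegrable (hq.mono fun _ hx => le_trans (le_min ha hb) hx.1)

theorem integral_min_mono (hq : MonotoneOn q (Ici 0)) {t z z' : ℝ} (ht : 0 ≤ t) (hzz' : z ≤ z') :
    ∫ y in (0 : ℝ)..t, min (q y) z ≤ ∫ y in (0 : ℝ)..t, min (q y) z' :=
  intervalIntegral.integral_mono_on ht (intervalIntegrable_min_of_monotoneOn hq z le_rfl ht)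
    (intervalIntegrable_min_of_monotoneOn hq z' le_rfl ht) fun _ _ => min_le_min_left _ hzz'

theorem integral_min_le (hq : MonotoneOn q (Ici 0)) {T t : ℝ} (hT : 0 ≤ T) (hTt : T ≤ t) (z : ℝ) :
    ∫ y in (0 : ℝ)..t, min (q y) z ≤ (∫ y in (0 : ℝ)..T, q y) + (t - T) * z := by
  rw [← intervalIntegral.integral_add_adjacent_intervals
    (intervalIntegrable_min_of_monotoneOn hq z le_rfl hT)
    (intervalIntegrable_min_of_monotoneOn hq z hT (hT.trans hTt))]
  gcongr
  · exact intervalIntegral.integral_mono_on hT (intervalIntegrable_min_of_monotoneOn hq z le_rfl hT)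
      (intervalIntegrable_of_monotoneOn hq le_rfl hT) fun _ _ => min_le_left _ _
  · calc ∫ y in T..t, min (q y) z ≤ ∫ _ in T..t, z :=
          intervalIntegral.integral_mono_on hTt
            (intervalIntegrable_min_of_monotoneOn hq z hT (hT.trans hTt))
            intervalIntegrable_const fun _ _ => min_le_right _ _
      _ = (t - T) * z := by simp

/-- On `[0, T]` the integrand dominates `(z / q T) * q`, and on `[T, t]` it equals `z`. -/
theorem le_integral_min (hq : MonotoneOn q (Ici 0)) (hq_nonneg : ∀ y, 0 ≤ y → 0 ≤ q y)
    {T t z : ℝ} (hT : 0 ≤ T) (hTt : T ≤ t) (hqT : 0 < q T) (hz : 0 ≤ z) (hzT : z ≤ q T) :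
    z * (t - T + (∫ y in (0 : ℝ)..T, q y) / q T) ≤ ∫ y in (0 : ℝ)..t, min (q y) z := by
  rw [← intervalIntegral.integral_add_adjacent_intervals
    (intervalIntegrable_min_of_monotoneOn hq z le_rfl hT)
    (intervalIntegrable_min_of_monotoneOn hq z hT (hT.trans hTt))]
  have hlow : z / q T * ∫ y in (0 : ℝ)..T, q y ≤ ∫ y in (0 : ℝ)..T, min (q y) z := by
    rw [← intervalIntegral.integral_const_mul]
    refine intervalIntegral.integral_mono_on hT
      ((intervalIntegrable_of_monotoneOn hq le_rfl hT).const_mul _)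
      (intervalIntegrable_min_of_monotoneOn hq z le_rfl hT) fun y hy => le_min ?_ ?_
    · exact mul_le_of_le_one_left (hq_nonneg y hy.1) ((div_le_one hqT).2 hzT)
    · calc z / q T * q y ≤ z / q T * q T := by gcongr; exact hq hy.1 hT hy.2
        _ = z := div_mul_cancel₀ z hqT.ne'
  have hhigh : ∫ y in T..t, min (q y) z = (t - T) * z := by
    rw [intervalIntegral.integral_congr (g := fun _ => z), intervalIntegral.integral_const,
      smul_eq_mul]
    intro y hy
    rw [uIcc_of_le hTt] at hy
    exact min_eq_right (hzT.trans (hq hT (hT.trans hy.1) hy.1))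
  rw [hhigh]
  have : z * ((∫ y in (0 : ℝ)..T, q y) / q T) = z / q T * ∫ y in (0 : ℝ)..T, q y := by ring
  linarith

theorem integral_min_pos (hq : MonotoneOn q (Ici 0)) (hq_pos : ∀ y, 0 < y → 0 < q y)
    {t z : ℝ} (ht : 0 < t) (hz : 0 < z) : 0 < ∫ y in (0 : ℝ)..t, min (q y) z :=
  intervalIntegral.intervalIntegral_pos_of_pos_on
    (intervalIntegrable_min_of_monotoneOn hq z le_rfl ht.le)
    (fun y hy => lt_min (hq_pos y hy.1) hz) ht

theorem antitoneOn_integral_add_sub_mul (hq : MonotoneOn q (Ici 0)) {β : ℝ} (hβ : 0 ≤ β) :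
    AntitoneOn (fun y => (∫ u in (0 : ℝ)..y, q u) + (β - y) * q y) (Ici β) := by
  intro u hu v _ huv
  have hu0 : (0 : ℝ) ≤ u := hβ.trans hu
  dsimp only
  rw [← intervalIntegral.integral_add_adjacent_intervals
    (intervalIntegrable_of_monotoneOn hq le_rfl hu0)
    (intervalIntegrable_of_monotoneOn hq hu0 (hu0.trans huv))]
  have hint : ∫ y in u..v, q y ≤ (v - u) * q v := by
    calc ∫ y in u..v, q y ≤ ∫ _ in u..v, q v :=
          intervalIntegral.integral_mono_on huv
            (intervalIntegrable_of_monotoneOn hq hu0 (hu0.trans huv)) intervalIntegrable_const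
            fun y hy => hq (hu0.trans hy.1) (hu0.trans huv) hy.2
      _ = (v - u) * q v := by simp
  have hcross : (β - u) * (q v - q u) ≤ 0 :=
    mul_nonpos_of_nonpos_of_nonneg (by linarith [mem_Ici.1 hu])
      (by linarith [hq hu0 (hu0.trans huv) huv])
  linarith

end TruncatedIntegral

theorem tendsto_natCast_mul_one_add_inv_rpow_sub_one (β : ℝ) :
    Tendsto (fun n : ℕ => (n : ℝ) * ((1 + 1 / (n : ℝ)) ^ β - 1)) atTop (nhds β) := by
  have hder : HasDerivAt (fun x : ℝ => (1 + x) ^ β) β 0 := by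
    simpa using ((hasDerivAt_id (0 : ℝ)).const_add 1).rpow_const (p := β) (by norm_num)
  have hinv : Tendsto (fun n : ℕ => 1 / (n : ℝ)) atTop (nhdsWithin 0 {0}ᶜ) :=
    (tendsto_inv_atTop_nhdsGT_zero.comp tendsto_natCast_atTop_atTop).mono_right
      (nhdsWithin_mono _ fun _ hx => ne_of_gt hx) |>.congr fun n => (one_div _).symm
  refine ((hasDerivAt_iff_tendsto_slope_zero.1 hder).comp hinv).congr fun n => ?_
  simp

theorem tendsto_one_add_inv_rpow (β : ℝ) :
    Tendsto (fun n : ℕ => (1 + 1 / (n : ℝ)) ^ β) atTop (nhds 1) := by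
  simpa using ((tendsto_one_div_atTop_nhds_zero_nat.const_add 1).rpow_const
    (Or.inl (by norm_num))).congr fun n => rfl

noncomputable def recStep (q : ℝ → ℝ) (β t z : ℝ) : ℝ :=
  (1 + 1 / t) ^ β * ((1 / t) * ∫ y in (0 : ℝ)..t, min (q y) z)

section RecStep

variable {q : ℝ → ℝ} {β : ℝ}

theorem eq_recStep_of_rpow_mul_eq {t z z' : ℝ} (ht : 0 < t)
    (h : (t / (t + 1)) ^ β * z' = (1 / t) * ∫ y in (0 : ℝ)..t, min (q y) z) :
    z' = recStep q β t z := by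
  have hinv : (1 + 1 / t) ^ β * (t / (t + 1)) ^ β = 1 := by
    rw [← Real.mul_rpow (by positivity) (by positivity)]
    convert Real.one_rpow β using 2
    field_simp
  rw [recStep, ← h, ← mul_assoc, hinv, one_mul]

theorem recStep_mono (hq : MonotoneOn q (Ici 0)) {t : ℝ} (ht : 0 ≤ t) :
    Monotone (recStep q β t) := fun z z' hzz' => by
  unfold recStep
  gcongr
  exact integral_min_mono hq ht hzz'

theorem recStep_pos (hq : MonotoneOn q (Ici 0)) (hq_pos : ∀ y, 0 < y → 0 < q y)
    {t z : ℝ} (ht : 0 < t) (hz : 0 < z) : 0 < recStep q β t z := by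
  unfold recStep
  have := integral_min_pos hq hq_pos ht hz
  positivity

theorem eventually_recStep_le_sub_div (hq : MonotoneOn q (Ici 0))
    (hq_nonneg : ∀ y, 0 ≤ y → 0 ≤ q y) {T : ℝ} (hT : 0 ≤ T)
    (hQ : (∫ y in (0 : ℝ)..T, q y) + (β - T) * q T < 0) :
    ∃ δ > 0, ∀ᶠ n : ℕ in atTop, ∀ z, q T ≤ z → recStep q β n z ≤ z - δ / n := by
  set C := ∫ y in (0 : ℝ)..T, q y
  set δ := -(C + (β - T) * q T) / 2 with hδ
  have hC : 0 ≤ C := intervalIntegral.integral_nonneg hT fun y hy => hq_nonneg y hy.1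
  have hβT : β - T < 0 := by nlinarith [hq_nonneg T hT]
  have hcoef := (tendsto_natCast_mul_one_add_inv_rpow_sub_one β).sub
    ((tendsto_one_add_inv_rpow β).mul_const T)
  have hlim := (((tendsto_one_add_inv_rpow β).mul_const C).add (hcoef.mul_const (q T))).add_const δ
  simp only [one_mul] at hlim hcoef
  refine ⟨δ, by linarith, ?_⟩
  filter_upwards [hlim.eventually_lt_const (show C + (β - T) * q T + δ < 0 by linarith),
    hcoef.eventually_lt_const hβT, tendsto_natCast_atTop_atTop.eventually_ge_atTop T,
    eventually_gt_atTop 0]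
    with n hlimn hcoefn hTn hn z hz
  set r := (1 + 1 / (n : ℝ)) ^ β
  have hn0 : (0 : ℝ) < n := by exact_mod_cast hn
  have hint : r * ∫ y in (0 : ℝ)..n, min (q y) z ≤ r * (C + (n - T) * z) :=
    mul_le_mul_of_nonneg_left (integral_min_le hq hT hTn z) (by positivity)
  have hcoefz : (n * (r - 1) - r * T) * z ≤ (n * (r - 1) - r * T) * q T :=
    mul_le_mul_of_nonpos_left hz hcoefn.le
  calc recStep q β n z = (r * ∫ y in (0 : ℝ)..n, min (q y) z) / n := by
        unfold recStep; ring
    _ ≤ (n * z - δ) / n := by gcongr; linarith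
    _ = z - δ / n := by field_simp

theorem eventually_mul_one_add_div_le_recStep (hq : MonotoneOn q (Ici 0))
    (hq_nonneg : ∀ y, 0 ≤ y → 0 ≤ q y) {T : ℝ} (hT : 0 ≤ T) (hqT : 0 < q T)
    (hQ : 0 < (∫ y in (0 : ℝ)..T, q y) + (β - T) * q T) :
    ∃ γ > 0, ∀ᶠ n : ℕ in atTop, ∀ z, 0 ≤ z → z ≤ q T → z * (1 + γ / n) ≤ recStep q β n z := by
  set C := ∫ y in (0 : ℝ)..T, q y
  set γ := (C + (β - T) * q T) / (2 * q T) with hγ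
  have hlimval : β - (T - C / q T) = 2 * γ := by rw [hγ]; field_simp; ring
  have hcoef := (tendsto_natCast_mul_one_add_inv_rpow_sub_one β).sub
    ((tendsto_one_add_inv_rpow β).mul_const (T - C / q T))
  rw [one_mul, hlimval] at hcoef
  have hγpos : 0 < γ := by positivity
  refine ⟨γ, hγpos, ?_⟩
  filter_upwards [hcoef.eventually_const_lt (show γ < 2 * γ by linarith),
    tendsto_natCast_atTop_atTop.eventually_ge_atTop T, eventually_gt_atTop 0]
    with n hcoefn hTn hn z hz hzT
  set r := (1 + 1 / (n : ℝ)) ^ β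
  have hn0 : (0 : ℝ) < n := by exact_mod_cast hn
  have hint : r * (z * (n - T + C / q T)) ≤ r * ∫ y in (0 : ℝ)..n, min (q y) z :=
    mul_le_mul_of_nonneg_left (le_integral_min hq hq_nonneg hT hTn hqT hz hzT) (by positivity)
  have hcoefz : z * γ ≤ z * (n * (r - 1) - r * (T - C / q T)) :=
    mul_le_mul_of_nonneg_left hcoefn.le hz
  calc z * (1 + γ / n) = (n * z + z * γ) / n := by field_simp
    _ ≤ (r * ∫ y in (0 : ℝ)..n, min (q y) z) / n := by gcongr; linarith
    _ = recStep q β n z := by unfold recStep; ring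

end RecStep

section Recursion

variable {q : ℝ → ℝ} {β : ℝ} {Z : ℕ → ℝ}

theorem eventually_le_of_recStep (hq : MonotoneOn q (Ici 0)) (hq_nonneg : ∀ y, 0 ≤ y → 0 ≤ q y)
    (hZ : ∀ᶠ n : ℕ in atTop, Z (n + 1) = recStep q β n (Z n)) {T : ℝ} (hT : 0 ≤ T)
    (hQ : (∫ y in (0 : ℝ)..T, q y) + (β - T) * q T < 0) :
    ∀ᶠ n in atTop, Z n ≤ q T := by
  obtain ⟨δ, hδ, hdrift⟩ := eventually_recStep_le_sub_div hq hq_nonneg hT hQ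
  refine eventually_le_of_eventually_le_sub_div hδ ?_
  filter_upwards [hZ, hdrift] with n hZn hn
  rw [hZn]
  refine ⟨fun hle => ?_, fun hlt => hn _ hlt.le⟩
  have : 0 ≤ δ / n := by positivity
  linarith [recStep_mono (β := β) hq n.cast_nonneg hle, hn _ le_rfl]

theorem eventually_ge_of_recStep (hq : MonotoneOn q (Ici 0)) (hq_nonneg : ∀ y, 0 ≤ y → 0 ≤ q y)
    (hZ : ∀ᶠ n : ℕ in atTop, Z (n + 1) = recStep q β n (Z n)) (hZ_pos : ∀ᶠ n in atTop, 0 < Z n)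
    {T : ℝ} (hT : 0 ≤ T) (hqT : 0 < q T)
    (hQ : 0 < (∫ y in (0 : ℝ)..T, q y) + (β - T) * q T) :
    ∀ᶠ n in atTop, q T ≤ Z n := by
  obtain ⟨γ, hγ, hdrift⟩ := eventually_mul_one_add_div_le_recStep hq hq_nonneg hT hqT hQ
  refine eventually_ge_of_eventually_mul_one_add_div_le hγ ?_
  filter_upwards [hZ, hZ_pos, hdrift] with n hZn hpos hn
  rw [hZn]
  refine ⟨hpos, fun hle => ?_, fun hlt => hn _ hpos.le hlt.le⟩
  have : 0 ≤ q T * (γ / n) := by positivity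
  linarith [recStep_mono (β := β) hq n.cast_nonneg hle, hn _ hqT.le le_rfl]

theorem pos_of_recStep (hq : MonotoneOn q (Ici 0)) (hq_pos : ∀ y, 0 < y → 0 < q y) {m : ℕ}
    (hm : 1 ≤ m) (hZm : 0 < Z m) (hZ : ∀ n ≥ m, Z (n + 1) = recStep q β n (Z n)) :
    ∀ n ≥ m, 0 < Z n := by
  intro n hn
  induction n, hn using Nat.le_induction with
  | base => exact hZm
  | succ n hn ih =>
    rw [hZ n hn]
    exact recStep_pos hq hq_pos (by exact_mod_cast hm.trans hn) ih

theorem tendsto_of_recStep (hq : MonotoneOn q (Ici 0)) (hq_nonneg : ∀ y, 0 ≤ y → 0 ≤ q y)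
    (hq_pos : ∀ y, 0 < y → 0 < q y) {b : ℝ} (hq_cont : ContinuousAt q b)
    (hZ : ∀ᶠ n : ℕ in atTop, Z (n + 1) = recStep q β n (Z n)) (hZ_pos : ∀ᶠ n in atTop, 0 < Z n)
    (hβ : 0 ≤ β) (hβb : β < b)
    (hQ_pos : ∀ T, β < T → T < b → 0 < (∫ y in (0 : ℝ)..T, q y) + (β - T) * q T)
    (hQ_neg : ∀ T, b < T → (∫ y in (0 : ℝ)..T, q y) + (β - T) * q T < 0) :
    Tendsto Z atTop (nhds (q b)) := by
  refine tendsto_order.2 ⟨fun a ha => ?_, fun a ha => ?_⟩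
  · obtain ⟨T, ⟨hβT, hTb⟩, haT⟩ := (Filter.Eventually.and (Ioo_mem_nhdsLT hβb)
      (nhdsWithin_le_nhds (hq_cont.eventually (eventually_gt_nhds ha)))).exists
    have hT : 0 < T := hβ.trans_lt hβT
    filter_upwards [eventually_ge_of_recStep hq hq_nonneg hZ hZ_pos hT.le (hq_pos T hT)
      (hQ_pos T hβT hTb)] with n hn
    linarith
  · obtain ⟨T, hbT, hTa⟩ := (Filter.Eventually.and (self_mem_nhdsWithin (s := Ioi b))
      (nhdsWithin_le_nhds (hq_cont.eventually (eventually_lt_nhds ha)))).exists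
    filter_upwards [eventually_le_of_recStep hq hq_nonneg hZ (hβ.trans (hβb.trans hbT).le)
      (hQ_neg T hbT)] with n hn
    linarith

end Recursion

theorem stmt14_general (α : ℝ) (hα : 0 < α) (A : EReal)
    (q : ℝ → ℝ) (hqnonneg : ∀ y, 0 ≤ y → 0 ≤ q y)
    (hqmono : MonotoneOn q (Set.Ici 0))
    (hqstrict : StrictMonoOn q {y : ℝ | 0 < y ∧ (y : EReal) < A})
    (hqdiff : ∀ y : ℝ, 0 < y → (y : EReal) < A → DifferentiableAt ℝ q y)
    (Q : ℝ → ℝ)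
    (hQ : ∀ y, Q y = (∫ u in (0:ℝ)..y, q u) + (1 / α - y) * q y)
    (b : ℝ) (hb1 : 1 / α < b) (hbA : (b : EReal) < A) (hQb : Q b = 0)
    (hbuniq : ∀ b' : ℝ, 0 < b' → Q b' = 0 → b' = b)
    (m : ℕ) (hm : 1 ≤ m) (c : ℝ) (hc : 0 < c)
    (Z : ℕ → ℝ) (hZm : Z m = c)
    (hZrec : ∀ n ≥ m, ((n : ℝ) / (n + 1)) ^ (1 / α) * Z (n + 1) =
      (1 / n) * ∫ y in (0:ℝ)..(n : ℝ), min (q y) (Z n)) :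
    Filter.Tendsto Z Filter.atTop (nhds (q b)) := by
  have hβ : 0 < 1 / α := by positivity
  have hb : 0 < b := hβ.trans hb1
  have hq_pos := pos_of_strictMonoOn_Ioc hqmono hqnonneg hb <| hqstrict.mono fun y hy =>
    ⟨hy.1, (EReal.coe_le_coe_iff.2 hy.2).trans_lt hbA⟩
  have hrec : ∀ n ≥ m, Z (n + 1) = recStep q (1 / α) n (Z n) := fun n hn =>
    eq_recStep_of_rpow_mul_eq (by exact_mod_cast hm.trans hn) (hZrec n hn)
  have hQ_anti : AntitoneOn Q (Ici (1 / α)) := by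
    simpa only [← hQ] using antitoneOn_integral_add_sub_mul hqmono hβ.le
  refine tendsto_of_recStep hqmono hqnonneg hq_pos (hqdiff b hb hbA).continuousAt
    (eventually_atTop.2 ⟨m, hrec⟩)
    (eventually_atTop.2 ⟨m, pos_of_recStep hqmono hq_pos hm (hZm ▸ hc) hrec⟩) hβ.le hb1
    (fun T hβT hTb => hQ T ▸ ?_) (fun T hbT => hQ T ▸ ?_)
  · exact (hQb ▸ hQ_anti hβT.le hb1.le hTb.le).lt_of_ne fun h =>
      hTb.ne (hbuniq T (hβ.trans hβT) h.symm)
  · exact (hQb ▸ hQ_anti hb1.le (hb1.trans hbT).le hbT.le).lt_of_ne fun h =>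
      hbT.ne' (hbuniq T (hb.trans hbT) h)

theorem stmt14 (α : ℝ) (hα : 0 < α) (A : EReal) (hA : (1 / α : ℝ) < A)
    (q : ℝ → ℝ) (hq0 : q 0 = 0) (hqnonneg : ∀ y, 0 ≤ y → 0 ≤ q y)
    (hqmono : MonotoneOn q (Set.Ici 0))
    (hqstrict : StrictMonoOn q {y : ℝ | 0 < y ∧ (y : EReal) < A})
    (hqdiff : ∀ y : ℝ, 0 < y → (y : EReal) < A → DifferentiableAt ℝ q y)
    (Q : ℝ → ℝ)
    (hQ : ∀ y, Q y = (∫ u in (0:ℝ)..y, q u) + (1 / α - y) * q y)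
    (b : ℝ) (hb1 : 1 / α < b) (hbA : (b : EReal) < A) (hQb : Q b = 0)
    (hbuniq : ∀ b' : ℝ, 0 < b' → Q b' = 0 → b' = b)
    (m : ℕ) (hm : 1 ≤ m) (c : ℝ) (hc : 0 < c)
    (Z : ℕ → ℝ) (hZm : Z m = c)
    (hZrec : ∀ n ≥ m, ((n : ℝ) / (n + 1)) ^ (1 / α) * Z (n + 1) =
      (1 / n) * ∫ y in (0:ℝ)..(n : ℝ), min (q y) (Z n)) :
    Filter.Tendsto Z Filter.atTop (nhds (q b)) :=
  stmt14_general α hα A q hqnonneg hqmono hqstrict hqdiff Q hQ b hb1 hbA hQb hbuniq m hm c hc Z hZm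
    hZrec
end

section
/- Let α > 0 and let F(x) = x^α L_F(x) for x ≥ 0 be a distribution function with lim_{x↓0} L_F(x) = 1. Then its generalized inverse F^{-1}(u) = sup{x : F(x) < u} satisfies lim_{u↓0} (F^{-1}(u))^α / u = 1. -/
set_option maxHeartbeats 800000


theorem stmt16 (α : ℝ) (hα : 0 < α) (F L : ℝ → ℝ) (hmono : Monotone F)
    (hrc : ∀ x, ContinuousWithinAt F (Set.Ici x) x)
    (hFneg : ∀ x < (0:ℝ), F x = 0)
    (hFL : ∀ x ≥ (0:ℝ), F x = x ^ α * L x)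
    (hL : Filter.Tendsto L (nhdsWithin 0 (Set.Ioi 0)) (nhds 1))
    (Finv : ℝ → ℝ) (hFinv : ∀ u, Finv u = sSup {x : ℝ | F x < u}) :
    Filter.Tendsto (fun u : ℝ => (Finv u) ^ α / u)
      (nhdsWithin 0 (Set.Ioi 0)) (nhds 1) := by
  rw [Metric.tendsto_nhds]
  intro ε' hε'
  set ε : ℝ := min (ε' / 4) (1 / 2) with hεdef
  have hε0 : 0 < ε := lt_min (by linarith) (by norm_num)
  have hεhalf : ε ≤ 1 / 2 := min_le_right _ _
  have hεε' : ε ≤ ε' / 4 := min_le_left _ _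
  have hem : (0:ℝ) < 1 - ε := by linarith
  have hep : (0:ℝ) < 1 + ε := by linarith
  -- extract δ from hL
  have hLev : {x : ℝ | |L x - 1| < ε} ∈ nhdsWithin 0 (Set.Ioi 0) := by
    have := Metric.tendsto_nhds.1 hL ε hε0
    simpa [Real.dist_eq, Filter.eventually_iff] using this
  obtain ⟨δ, hδ0, hδ⟩ := Metric.mem_nhdsWithin_iff.1 hLev
  have hLbound : ∀ x : ℝ, 0 < x → x < δ → |L x - 1| < ε := by
    intro x hx1 hx2
    exact hδ ⟨by simpa [Metric.mem_ball, Real.dist_eq, abs_of_pos hx1] using hx2, hx1⟩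
  have hδ2 : (0:ℝ) < δ / 2 := by linarith
  have hδ2α : (0:ℝ) < (δ / 2) ^ α := Real.rpow_pos_of_pos hδ2 α
  set u₀ : ℝ := (1 - ε) * (δ / 2) ^ α with hu₀def
  have hu₀ : 0 < u₀ := mul_pos hem hδ2α
  rw [Filter.eventually_iff]
  refine Metric.mem_nhdsWithin_iff.2 ⟨u₀, hu₀, ?_⟩
  rintro u ⟨hub, hu⟩
  have hu : (0:ℝ) < u := hu
  have huu₀ : u < u₀ := by
    have : |u| < u₀ := by simpa [Real.dist_eq] using hub
    exact lt_of_le_of_lt (le_abs_self u) this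
  set S := {x : ℝ | F x < u} with hSdef
  set xhi : ℝ := (u / (1 - ε)) ^ α⁻¹ with hxhidef
  set xlo : ℝ := (u / (1 + ε)) ^ α⁻¹ with hxlodef
  have hdivhi : (0:ℝ) < u / (1 - ε) := div_pos hu hem
  have hdivlo : (0:ℝ) < u / (1 + ε) := div_pos hu hep
  have hxhi0 : 0 < xhi := Real.rpow_pos_of_pos hdivhi _
  have hxlo0 : 0 < xlo := Real.rpow_pos_of_pos hdivlo _
  have hxhiα : xhi ^ α = u / (1 - ε) := Real.rpow_inv_rpow hdivhi.le hα.ne'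
  have hxloα : xlo ^ α = u / (1 + ε) := Real.rpow_inv_rpow hdivlo.le hα.ne'
  -- xlo < δ/2
  have hxloδ : xlo < δ / 2 := by
    by_contra h
    push_neg at h
    have h1 : (δ / 2) ^ α ≤ xlo ^ α := Real.rpow_le_rpow hδ2.le h hα.le
    rw [hxloα] at h1
    have h2 : (1 + ε) * (δ / 2) ^ α ≤ u := by
      rw [le_div_iff₀ hep] at h1; linarith
    nlinarith
  -- S is nonempty
  have hSne : S.Nonempty := ⟨-1, by simp only [hSdef, Set.mem_setOf_eq, hFneg (-1) (by norm_num)]; exact hu⟩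
  -- upper bound for S
  have hubS : ∀ x ∈ S, x ≤ xhi := by
    intro x hx
    by_contra h
    push_neg at h
    have hx0 : 0 < x := hxhi0.trans h
    have hFx : F x < u := hx
    rcases le_or_gt (δ / 2) x with hc | hc
    · have h1 : F (δ / 2) ≤ F x := hmono hc
      have h2 : F (δ / 2) = (δ / 2) ^ α * L (δ / 2) := hFL _ hδ2.le
      have h3 : |L (δ / 2) - 1| < ε := hLbound _ hδ2 (by linarith)
      have h4 := (abs_lt.1 h3).1
      have h5 : (1 - ε) * (δ / 2) ^ α ≤ F (δ / 2) := by
        rw [h2]; nlinarith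
      nlinarith
    · have h3 : |L x - 1| < ε := hLbound x hx0 (by linarith)
      have h4 := (abs_lt.1 h3).1
      have hxα : xhi ^ α ≤ x ^ α := Real.rpow_le_rpow hxhi0.le h.le hα.le
      rw [hxhiα] at hxα
      have hxαpos : 0 < x ^ α := Real.rpow_pos_of_pos hx0 α
      have h5 : u ≤ F x := by
        rw [hFL x hx0.le]
        have h6 : u ≤ (1 - ε) * x ^ α := by
          rw [div_le_iff₀ hem] at hxα; linarith
        nlinarith
      linarith
  have hbdd : BddAbove S := ⟨xhi, hubS⟩
  have hFinvle : Finv u ≤ xhi := by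
    rw [hFinv]; exact csSup_le hSne hubS
  -- lower bound: (0, xlo) ⊆ S
  have hmemS : ∀ y : ℝ, 0 < y → y < xlo → y ∈ S := by
    intro y hy0 hy
    have hyδ : y < δ := by linarith
    have h3 := (abs_lt.1 (hLbound y hy0 hyδ)).2
    show F y < u
    rw [hFL y hy0.le]
    have hyα : y ^ α < xlo ^ α := Real.rpow_lt_rpow hy0.le hy hα
    rw [hxloα] at hyα
    have hyαpos : 0 < y ^ α := Real.rpow_pos_of_pos hy0 α
    have h6 : y ^ α * (1 + ε) < u := by
      rw [lt_div_iff₀ hep] at hyα; linarith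
    nlinarith
  have hFinvge : xlo ≤ Finv u := by
    rw [hFinv]
    refine le_of_forall_lt fun c hc => ?_
    set y : ℝ := (max c 0 + xlo) / 2 with hydef
    have hmax0 : (0:ℝ) ≤ max c 0 := le_max_right c 0
    have hmaxlt : max c 0 < xlo := max_lt hc hxlo0
    have hy0 : 0 < y := by rw [hydef]; linarith
    have hy1 : y < xlo := by rw [hydef]; linarith
    have hcy : c < y := by
      have := le_max_left c 0
      rw [hydef]; linarith
    exact lt_of_lt_of_le hcy (le_csSup hbdd (hmemS y hy0 hy1))
  have hFinv0 : 0 < Finv u := lt_of_lt_of_le hxlo0 hFinvge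
  have hPle : (Finv u) ^ α ≤ u / (1 - ε) := by
    rw [← hxhiα]; exact Real.rpow_le_rpow hFinv0.le hFinvle hα.le
  have hPge : u / (1 + ε) ≤ (Finv u) ^ α := by
    rw [← hxloα]; exact Real.rpow_le_rpow hxlo0.le hFinvge hα.le
  show dist ((Finv u) ^ α / u) 1 < ε'
  rw [Real.dist_eq, abs_lt]
  constructor
  · rw [lt_sub_iff_add_lt, lt_div_iff₀ hu]
    have h7 : u / (1 + ε) ≥ u * (1 - ε) := by
      rw [ge_iff_le, le_div_iff₀ hep]; nlinarith [mul_pos hu (mul_pos hε0 hε0)]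
    nlinarith
  · rw [sub_lt_iff_lt_add, div_lt_iff₀ hu]
    have h7 : u / (1 - ε) ≤ u * (1 + 2 * ε) := by
      rw [div_le_iff₀ hem]; nlinarith [mul_nonneg hu.le (mul_nonneg hε0.le (show (0:ℝ) ≤ 1 - 2*ε by linarith))]
    nlinarith
end

section
/- Let α > 0 and consider the scaled one-choice optimal stopping values W¹_n = n^{1/α} V¹_n for i.i.d. random variables with distribution function x^α on [0,1], where V¹_{n+1} = E[X ∧ V¹_n] = α∫₀^{V¹_n} x^α dx + (1 − (V¹_n)^α)V¹_n and V¹_1 = E[X]. Then lim_{n→∞} W¹_n = (1 + 1/α)^{1/α}, equivalently lim_{n→∞} n·(V¹_n)^α = 1 + 1/α. -/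
/-!
Put `x n = V (n + 1)`. Evaluating the integral turns the recursion into
`x (n + 1) = x n * (1 - x n ^ α / (α + 1))`, so `x` decreases to `0`. For `u n = x n ^ (-α)` and
`t = x n ^ α / (α + 1)` one has `u (n + 1) - u n = ((1 - t) ^ (-α) - 1) / t / (α + 1)`, a difference
quotient of `s ↦ (1 - s) ^ (-α)` at `0`, which tends to `α / (α + 1)`. By Cesàro,
`u n / n → α / (α + 1)`, i.e. `n * x n ^ α → 1 + 1 / α`.
-/

open Filter Topology Finset

lemma mul_integral_rpow_add_one_sub_rpow_mul {α : ℝ} (hα : -1 < α) (v : ℝ) :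
    α * (∫ x in (0:ℝ)..v, x ^ α) + (1 - v ^ α) * v = v * (1 - v ^ α / (α + 1)) := by
  have hα1 : α + 1 ≠ 0 := by linarith
  have hpow : v ^ (α + 1) = v ^ α * v := by
    rcases eq_or_ne v 0 with rfl | hv
    · simp [Real.zero_rpow hα1]
    · exact Real.rpow_add_one hv α
  rw [integral_rpow (Or.inl hα), Real.zero_rpow hα1, hpow]
  field_simp
  ring

lemma tendsto_div_natCast_of_tendsto_sub {u : ℕ → ℝ} {ℓ : ℝ}
    (h : Tendsto (fun n => u (n + 1) - u n) atTop (𝓝 ℓ)) :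
    Tendsto (fun n : ℕ => u n / n) atTop (𝓝 ℓ) := by
  have hmean : Tendsto (fun n : ℕ => (n : ℝ)⁻¹ * (u n - u 0)) atTop (𝓝 ℓ) :=
    h.cesaro.congr fun n => by rw [sum_range_sub]
  have hinit : Tendsto (fun n : ℕ => (n : ℝ)⁻¹ * u 0) atTop (𝓝 0) := by
    simpa using tendsto_inv_atTop_nhds_zero_nat.mul_const (u 0)
  simpa [div_eq_inv_mul, mul_sub] using hmean.add hinit

lemma tendsto_slope_one_sub_rpow_neg {ι : Type*} {l : Filter ι} {t : ι → ℝ} (p : ℝ)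
    (ht : Tendsto t l (𝓝[≠] 0)) :
    Tendsto (fun i => ((1 - t i) ^ (-p) - 1) / t i) l (𝓝 p) := by
  have hderiv : HasDerivAt (fun s : ℝ => (1 - s) ^ (-p)) p 0 := by
    simpa using ((hasDerivAt_id (0 : ℝ)).const_sub 1).rpow_const (p := -p) (by simp)
  refine ((hasDerivAt_iff_tendsto_slope.1 hderiv).comp ht).congr fun i => ?_
  simp [slope_def_field]

section Recursion

variable {p c v : ℝ} {x : ℕ → ℝ}

lemma mul_one_sub_rpow_div_mem_Ioo (hv : 0 < v) (hvc : v ^ p < c) :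
    v * (1 - v ^ p / c) ∈ Set.Ioo 0 v := by
  have hvp : 0 < v ^ p := Real.rpow_pos_of_pos hv p
  have hc : 0 < c := hvp.trans hvc
  have hratio : v ^ p / c < 1 := (div_lt_one hc).2 hvc
  constructor
  · nlinarith
  · nlinarith [div_pos hvp hc]

lemma rpow_neg_mul_one_sub_rpow_div_sub (hv : 0 < v) (hvc : v ^ p < c) :
    (v * (1 - v ^ p / c)) ^ (-p) - v ^ (-p) =
      ((1 - v ^ p / c) ^ (-p) - 1) / (v ^ p / c) / c := by
  have hvp : 0 < v ^ p := Real.rpow_pos_of_pos hv p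
  have hc : 0 < c := hvp.trans hvc
  have hfac : 0 ≤ 1 - v ^ p / c := by rw [sub_nonneg, div_le_one hc]; exact hvc.le
  rw [Real.mul_rpow hv.le hfac, Real.rpow_neg hv.le]
  field_simp

lemma pos_and_rpow_lt_of_rec (hp : 0 < p) (hrec : ∀ n, x (n + 1) = x n * (1 - x n ^ p / c))
    (hx0 : 0 < x 0) (hx0c : x 0 ^ p < c) (n : ℕ) : 0 < x n ∧ x n ^ p < c := by
  induction n with
  | zero => exact ⟨hx0, hx0c⟩
  | succ n ih =>
    have hstep := hrec n ▸ mul_one_sub_rpow_div_mem_Ioo ih.1 ih.2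
    exact ⟨hstep.1, (Real.rpow_lt_rpow hstep.1.le hstep.2 hp).trans ih.2⟩

lemma tendsto_zero_of_rec (hp : 0 < p) (hrec : ∀ n, x (n + 1) = x n * (1 - x n ^ p / c))
    (hx0 : 0 < x 0) (hx0c : x 0 ^ p < c) : Tendsto x atTop (𝓝 0) := by
  have hinv := pos_and_rpow_lt_of_rec hp hrec hx0 hx0c
  have hanti : Antitone x := antitone_nat_of_succ_le fun n =>
    (hrec n ▸ mul_one_sub_rpow_div_mem_Ioo (hinv n).1 (hinv n).2).2.le
  obtain ⟨L, hL⟩ : ∃ L, Tendsto x atTop (𝓝 L) :=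
    ⟨_, tendsto_atTop_ciInf hanti ⟨0, fun _ ⟨n, hn⟩ => hn ▸ (hinv n).1.le⟩⟩
  have hL0 : 0 ≤ L := ge_of_tendsto' hL fun n => (hinv n).1.le
  have hc : c ≠ 0 := ((Real.rpow_pos_of_pos hx0 p).trans hx0c).ne'
  have hfix : L = L * (1 - L ^ p / c) := by
    refine tendsto_nhds_unique ((tendsto_add_atTop_iff_nat 1).2 hL) ?_
    simp_rw [hrec]
    exact hL.mul (tendsto_const_nhds.sub ((hL.rpow_const (Or.inr hp.le)).div_const c))
  have hprod : L * L ^ p = 0 := by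
    field_simp at hfix
    linarith
  rcases mul_eq_zero.1 hprod with h | h
  · rwa [h] at hL
  · rwa [(Real.rpow_eq_zero hL0 hp.ne').1 h] at hL

theorem tendsto_natCast_mul_rpow_of_rec (hp : 0 < p)
    (hrec : ∀ n, x (n + 1) = x n * (1 - x n ^ p / c)) (hx0 : 0 < x 0) (hx0c : x 0 ^ p < c) :
    Tendsto (fun n : ℕ => (n : ℝ) * x n ^ p) atTop (𝓝 (c / p)) := by
  have hinv := pos_and_rpow_lt_of_rec hp hrec hx0 hx0c
  have hc : 0 < c := (Real.rpow_pos_of_pos hx0 p).trans hx0c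
  have ht : Tendsto (fun n => x n ^ p / c) atTop (𝓝[≠] 0) := by
    refine tendsto_nhdsWithin_iff.2 ⟨?_, Eventually.of_forall fun n => ?_⟩
    · simpa [Real.zero_rpow hp.ne'] using
        ((tendsto_zero_of_rec hp hrec hx0 hx0c).rpow_const (Or.inr hp.le)).div_const c
    · exact (div_pos (Real.rpow_pos_of_pos (hinv n).1 p) hc).ne'
  have hdiff : Tendsto (fun n => x (n + 1) ^ (-p) - x n ^ (-p)) atTop (𝓝 (p / c)) :=
    ((tendsto_slope_one_sub_rpow_neg p ht).div_const c).congr fun n => by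
      rw [hrec n, rpow_neg_mul_one_sub_rpow_div_sub (hinv n).1 (hinv n).2]
  have hu := (tendsto_div_natCast_of_tendsto_sub (u := fun n => x n ^ (-p)) hdiff).inv₀ (div_pos hp hc).ne'
  refine (inv_div p c ▸ hu).congr fun n => ?_
  rw [Real.rpow_neg (hinv n).1.le, inv_div, div_inv_eq_mul]

end Recursion

theorem stmt19 (α : ℝ) (hα : 0 < α) (V : ℕ → ℝ)
    (hV1 : V 1 = α / (α + 1))
    (hVrec : ∀ n : ℕ, 1 ≤ n →
      V (n + 1) = α * (∫ x in (0:ℝ)..(V n), x ^ α) + (1 - (V n) ^ α) * V n) :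
    Filter.Tendsto (fun n : ℕ => (n : ℝ) ^ (1 / α) * V n) Filter.atTop
        (nhds ((1 + 1 / α) ^ (1 / α))) ∧
      Filter.Tendsto (fun n : ℕ => (n : ℝ) * (V n) ^ α) Filter.atTop
        (nhds (1 + 1 / α)) := by
  set x : ℕ → ℝ := fun n => V (n + 1)
  have hrec : ∀ n, x (n + 1) = x n * (1 - x n ^ α / (α + 1)) := fun n => by
    rw [← mul_integral_rpow_add_one_sub_rpow_mul (by linarith)]
    exact hVrec (n + 1) (Nat.le_add_left 1 n)
  have hx0 : 0 < x 0 := by simp only [x, hV1]; positivity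
  have hx0c : x 0 ^ α < α + 1 := by
    have hx1 : x 0 < 1 := by simp only [x, hV1]; rw [div_lt_one (by linarith)]; linarith
    linarith [Real.rpow_lt_one hx0.le hx1 hα]
  have hlim : (α + 1) / α = 1 + 1 / α := by field_simp
  have hx := hlim ▸ tendsto_natCast_mul_rpow_of_rec hα hrec hx0 hx0c
  have hxα : Tendsto (fun n => x n ^ α) atTop (𝓝 0) := by
    simpa [Real.zero_rpow hα.ne'] using
      (tendsto_zero_of_rec hα hrec hx0 hx0c).rpow_const (Or.inr hα.le)
  have hV : Tendsto (fun n : ℕ => (n : ℝ) * V n ^ α) atTop (𝓝 (1 + 1 / α)) := by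
    rw [← tendsto_add_atTop_iff_nat 1]
    refine (add_zero (1 + 1 / α) ▸ hx.add hxα).congr fun n => ?_
    push_cast
    ring
  refine ⟨(hV.rpow_const (p := 1 / α) (Or.inl (by positivity))).congr' ?_, hV⟩
  filter_upwards [eventually_ge_atTop 1] with n hn
  obtain ⟨m, rfl⟩ := Nat.exists_eq_add_of_le' hn
  have hVpos : 0 < V (m + 1) := (pos_and_rpow_lt_of_rec hα hrec hx0 hx0c m).1
  rw [Real.mul_rpow (Nat.cast_nonneg _) (Real.rpow_nonneg hVpos.le α), ← Real.rpow_mul hVpos.le,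
    mul_one_div_cancel hα.ne', Real.rpow_one]
end
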